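/- arXiv:1904.09880 — 9 statements merged into one kernel-verified Lean document; each statement's English description precedes it below -/
import Mathlib

section
/- Let F₁(s) = ∫₀ˢ (1 − t³)^{−2/3} dt and F₂(s) = ∫₀ˢ (1 − t³)^{−1/2} dt for s ∈ [0,1], with π_{3/2,3} = 2F₁(1). For every y ∈ [0, π_{3/2,3}/4], if S, σ ∈ [0,1] satisfy F₁(S) = 2y and F₂(σ) = 2^{2/3}·y, and C = (1 − σ³)^{1/2}, then S = (1 − C)^{1/3}·(3 + C) / ((1 + C)^{1/3}·(3 − C)). -/
open Real MeasureTheory intervalIntegral Set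

lemma integ_aux (p : ℝ) (hp : -1 < p) (hp0 : p < 0) :
    IntervalIntegrable (fun t : ℝ => (1 - t ^ 3) ^ p) volume 0 1 := by
  have h1 : IntervalIntegrable (fun t : ℝ => t ^ p) volume 0 1 :=
    intervalIntegrable_rpow' hp
  have h2 : IntervalIntegrable (fun t : ℝ => (1 - t) ^ p) volume 0 1 := by
    have := (h1.comp_sub_left 1).symm
    simpa using this
  apply h2.mono_fun
  · apply Measurable.aestronglyMeasurable
    fun_prop
  · rw [Filter.EventuallyLE, ae_restrict_iff' measurableSet_uIoc]
    filter_upwards with t ht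
    rw [uIoc_of_le (by norm_num)] at ht
    obtain ⟨ht0, ht1⟩ := ht
    rcases eq_or_lt_of_le ht1 with h | h
    · subst h; simp [Real.zero_rpow (ne_of_lt hp0)]
    · have hb : 0 < 1 - t := by linarith
      have hcube : t ^ 3 ≤ t := by
        calc t ^ 3 ≤ t ^ 1 := pow_le_pow_of_le_one ht0.le ht1 (by norm_num)
        _ = t := pow_one t
      have hle : 1 - t ≤ 1 - t ^ 3 := by linarith
      rw [norm_of_nonneg (rpow_nonneg (by linarith) p),
        norm_of_nonneg (rpow_nonneg hb.le p)]
      exact rpow_le_rpow_of_nonpos hb hle hp0.le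

noncomputable def pqG (c : ℝ) : ℝ :=
  (1 - c) ^ ((1:ℝ)/3) * (3 + c) / ((1 + c) ^ ((1:ℝ)/3) * (3 - c))

lemma cube_rpow_third {x : ℝ} (hx : 0 ≤ x) : (x ^ ((1:ℝ)/3)) ^ 3 = x := by
  rw [← rpow_natCast (x ^ ((1:ℝ)/3)) 3, ← rpow_mul hx]; norm_num

lemma sq_rpow_half {x : ℝ} (hx : 0 ≤ x) : (x ^ ((1:ℝ)/2)) ^ 2 = x := by
  rw [← rpow_natCast (x ^ ((1:ℝ)/2)) 2, ← rpow_mul hx]; norm_num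

lemma rpow_third_sub_one {x : ℝ} (hx : 0 < x) :
    x ^ ((1:ℝ)/3 - 1) = ((x ^ ((1:ℝ)/3)) ^ 2)⁻¹ := by
  rw [← rpow_natCast (x ^ ((1:ℝ)/3)) 2, ← rpow_mul hx.le, ← rpow_neg hx.le]
  norm_num

lemma rpow_half_sub_one {x : ℝ} (hx : 0 < x) :
    x ^ ((1:ℝ)/2 - 1) = (x ^ ((1:ℝ)/2))⁻¹ := by
  rw [← rpow_neg hx.le]; norm_num

lemma cube_neg_two_thirds {w : ℝ} (hw : 0 < w) :
    (w ^ 3) ^ (-(2/3) : ℝ) = (w ^ 2)⁻¹ := by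
  rw [← rpow_natCast w 3, ← rpow_mul hw.le, ← rpow_natCast w 2, ← rpow_neg hw.le]
  norm_num

lemma cube_eq_cube {a b : ℝ} (ha : 0 ≤ a) (hb : 0 ≤ b) (h : a ^ 3 = b ^ 3) : a = b :=
  (pow_left_strictMonoOn₀ (n := 3) (by norm_num)).injOn ha hb h

lemma pqG_denom_pos {c : ℝ} (hc0 : 0 ≤ c) (hc1 : c ≤ 1) :
    0 < (1 + c) ^ ((1:ℝ)/3) * (3 - c) :=
  mul_pos (rpow_pos_of_pos (by linarith) _) (by linarith)

lemma one_sub_pqG_cube {c : ℝ} (hc0 : 0 ≤ c) (hc1 : c ≤ 1) :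
    1 - pqG c ^ 3 = 16 * c ^ 3 / ((1 + c) * (3 - c) ^ 3) := by
  have hv : ((1 + c) ^ ((1:ℝ)/3)) ^ 3 = 1 + c := cube_rpow_third (by linarith)
  have hu : ((1 - c) ^ ((1:ℝ)/3)) ^ 3 = 1 - c := cube_rpow_third (by linarith)
  have hvpos : (0:ℝ) < (1 + c) ^ ((1:ℝ)/3) := rpow_pos_of_pos (by linarith) _
  rw [pqG, div_pow, mul_pow, mul_pow, hu, hv]
  have h3 : (3:ℝ) - c ≠ 0 := by linarith
  field_simp
  ring

lemma pqG_nonneg {c : ℝ} (hc0 : 0 ≤ c) (hc1 : c ≤ 1) : 0 ≤ pqG c := by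
  apply div_nonneg _ (pqG_denom_pos hc0 hc1).le
  exact mul_nonneg (rpow_nonneg (by linarith) _) (by linarith)

lemma pqG_le_one {c : ℝ} (hc0 : 0 ≤ c) (hc1 : c ≤ 1) : pqG c ≤ 1 := by
  nlinarith [one_sub_pqG_cube hc0 hc1, pqG_nonneg hc0 hc1,
    div_nonneg (by positivity : (0:ℝ) ≤ 16 * c ^ 3)
      (mul_nonneg (by linarith) (pow_nonneg (by linarith) 3) : (0:ℝ) ≤ (1 + c) * (3 - c) ^ 3),
    sq_nonneg (pqG c - 1), sq_nonneg (pqG c + 1)]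

lemma pqG_lt_one {c : ℝ} (hc0 : 0 < c) (hc1 : c ≤ 1) : pqG c < 1 := by
  rcases lt_or_eq_of_le (pqG_le_one hc0.le hc1) with h | h
  · exact h
  · exfalso
    have h1 := one_sub_pqG_cube hc0.le hc1
    rw [h] at h1
    have h3 : (0:ℝ) < 3 - c := by linarith
    have : 0 < 16 * c ^ 3 / ((1 + c) * (3 - c) ^ 3) := by positivity
    simp at h1; linarith

lemma pqG_pos {c : ℝ} (hc0 : 0 ≤ c) (hc1 : c < 1) : 0 < pqG c := by
  apply div_pos _ (pqG_denom_pos hc0 hc1.le)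
  exact mul_pos (rpow_pos_of_pos (by linarith) _) (by linarith)

lemma integ_sub (p : ℝ) (hp : -1 < p) (hp0 : p < 0) {a b : ℝ}
    (ha : a ∈ Icc (0:ℝ) 1) (hb : b ∈ Icc (0:ℝ) 1) :
    IntervalIntegrable (fun t : ℝ => (1 - t ^ 3) ^ p) volume a b := by
  apply (integ_aux p hp hp0).mono_set
  rw [uIcc_of_le (by norm_num : (0:ℝ) ≤ 1)]
  exact uIcc_subset_Icc ha hb

lemma primitive_continuousOn (p : ℝ) (hp : -1 < p) (hp0 : p < 0) :
    ContinuousOn (fun s => ∫ t in (0:ℝ)..s, (1 - t ^ 3) ^ p) (Icc (0:ℝ) 1) := by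
  have h : IntegrableOn (fun t : ℝ => (1 - t ^ 3) ^ p) (uIcc (0:ℝ) 1) volume := by
    rw [uIcc_of_le (by norm_num : (0:ℝ) ≤ 1), integrableOn_Icc_iff_integrableOn_Ioc]
    exact (integ_aux p hp hp0).1
  simpa [uIcc_of_le (by norm_num : (0:ℝ) ≤ 1)] using
    intervalIntegral.continuousOn_primitive_interval h

lemma primitive_strictMonoOn (p : ℝ) (hp : -1 < p) (hp0 : p < 0) :
    StrictMonoOn (fun s => ∫ t in (0:ℝ)..s, (1 - t ^ 3) ^ p) (Icc (0:ℝ) 1) := by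
  intro a ha b hb hab
  have h1 : IntervalIntegrable (fun t : ℝ => (1 - t ^ 3) ^ p) volume 0 a :=
    integ_sub p hp hp0 (by norm_num) ⟨ha.1, ha.2⟩
  have h2 : IntervalIntegrable (fun t : ℝ => (1 - t ^ 3) ^ p) volume a b :=
    integ_sub p hp hp0 ha hb
  have hpos : ∀ x ∈ Ioo a b, 0 < (1 - x ^ 3) ^ p := by
    intro x hx
    have hx1 : x < 1 := lt_of_lt_of_le hx.2 hb.2
    have hx0 : 0 ≤ x := le_trans ha.1 hx.1.le
    have : 0 < 1 - x ^ 3 := by nlinarith [pow_lt_one₀ hx0 hx1 (by norm_num : 3 ≠ 0)]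
    exact rpow_pos_of_pos this p
  have hlt := intervalIntegral_pos_of_pos_on h2 hpos hab
  have hsplit := integral_add_adjacent_intervals h1 h2
  dsimp only
  linarith [hsplit]

lemma final_algebra (U V E c : ℝ) (hU : 0 < U) (hV : 0 < V) (hE : 0 < E)
    (hc : 0 < c) (hc1 : c < 1) (hU3 : U ^ 3 = 1 - c) (hV3 : V ^ 3 = 1 + c)
    (hE3 : E ^ 3 = 2) :
    ((2 * E * c / (V * (3 - c))) ^ 2)⁻¹ *
        (((-1 * (1 / 3) * ((U ^ 2)⁻¹) * (3 + c) + U * 1) * (V * (3 - c)) -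
              U * (3 + c) * (1 * (1 / 3) * ((V ^ 2)⁻¹) * (3 - c) + V * (-1))) /
            (V * (3 - c)) ^ 2 *
          (-(3 * ((U * V) ^ 2) ) * (1 / 2) * c⁻¹)) -
      E * c⁻¹ = 0 := by
  have h3c : (0:ℝ) < 3 - c := by linarith
  field_simp
  ring_nf
  linear_combination (9 - c^2 - 18*U^3) * hV3 + (-9 - 18*c - c^2) * hU3 + (-8*c^2) * hE3

lemma key_hasDerivAt (σ : ℝ) (h0 : 0 < σ) (h1 : σ < 1) :
    HasDerivAt (fun x : ℝ =>
      (∫ t in (0:ℝ)..pqG ((1 - x ^ 3) ^ ((1:ℝ)/2)), (1 - t ^ 3) ^ (-(2/3) : ℝ))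
        - 2 ^ ((1:ℝ)/3) * ∫ t in (0:ℝ)..x, (1 - t ^ 3) ^ (-(1/2) : ℝ)) 0 σ := by
  have hσ3 : 0 < 1 - σ ^ 3 := by nlinarith [pow_lt_one₀ h0.le h1 (by norm_num : 3 ≠ 0)]
  set c := (1 - σ ^ 3) ^ ((1:ℝ)/2) with hcdef
  have hcpos : 0 < c := rpow_pos_of_pos hσ3 _
  have hc2 : c ^ 2 = 1 - σ ^ 3 := sq_rpow_half hσ3.le
  have hclt1 : c < 1 := by nlinarith [pow_pos h0 3]
  have hupos : 0 < ((1 - c) ^ ((1:ℝ)/3)) := rpow_pos_of_pos (by linarith) _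
  have hvpos : 0 < ((1 + c) ^ ((1:ℝ)/3)) := rpow_pos_of_pos (by linarith) _
  have hu3 : ((1 - c) ^ ((1:ℝ)/3)) ^ 3 = 1 - c := cube_rpow_third (by linarith)
  have hv3 : ((1 + c) ^ ((1:ℝ)/3)) ^ 3 = 1 + c := cube_rpow_third (by linarith)
  have hepos : 0 < ((2:ℝ) ^ ((1:ℝ)/3)) := rpow_pos_of_pos (by norm_num) _
  have he3 : ((2:ℝ) ^ ((1:ℝ)/3)) ^ 3 = 2 := cube_rpow_third (by norm_num)
  have huv : ((1 - c) ^ ((1:ℝ)/3)) * ((1 + c) ^ ((1:ℝ)/3)) = σ := by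
    apply cube_eq_cube (by positivity) h0.le
    rw [mul_pow, hu3, hv3]; nlinarith
  -- derivative of the inner function x ↦ (1-x^3)^(1/2)
  have hx3 : HasDerivAt (fun x : ℝ => 1 - x ^ 3) (-(3 * σ ^ 2)) σ := by
    simpa using (hasDerivAt_pow 3 σ).const_sub 1
  have hcd : HasDerivAt (fun x : ℝ => (1 - x ^ 3) ^ ((1:ℝ)/2))
      (-(3 * σ ^ 2) * ((1:ℝ)/2) * (1 - σ ^ 3) ^ ((1:ℝ)/2 - 1)) σ :=
    hx3.rpow_const (Or.inl hσ3.ne')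
  -- derivative of pqG at c
  have hud : HasDerivAt (fun z : ℝ => (1 - z) ^ ((1:ℝ)/3))
      (-1 * ((1:ℝ)/3) * (1 - c) ^ ((1:ℝ)/3 - 1)) c := by
    have h := ((hasDerivAt_id c).const_sub 1).rpow_const
      (p := (1:ℝ)/3) (Or.inl (by intro h; simp at h; linarith))
    simpa using h
  have hvd : HasDerivAt (fun z : ℝ => (1 + z) ^ ((1:ℝ)/3))
      (1 * ((1:ℝ)/3) * (1 + c) ^ ((1:ℝ)/3 - 1)) c := by
    have h := ((hasDerivAt_id c).const_add 1).rpow_const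
      (p := (1:ℝ)/3) (Or.inl (by intro h; simp at h; linarith))
    simpa using h
  have hN : HasDerivAt (fun z : ℝ => (1 - z) ^ ((1:ℝ)/3) * (3 + z))
      ((-1 * ((1:ℝ)/3) * (1 - c) ^ ((1:ℝ)/3 - 1)) * (3 + c) + ((1 - c) ^ ((1:ℝ)/3)) * 1) c := by
    exact hud.mul ((hasDerivAt_id c).const_add 3)
  have hD : HasDerivAt (fun z : ℝ => (1 + z) ^ ((1:ℝ)/3) * (3 - z))
      ((1 * ((1:ℝ)/3) * (1 + c) ^ ((1:ℝ)/3 - 1)) * (3 - c) + ((1 + c) ^ ((1:ℝ)/3)) * (-1)) c := by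
    exact hvd.mul ((hasDerivAt_id c).const_sub 3)
  have hDne : ((1 + c) ^ ((1:ℝ)/3)) * (3 - c) ≠ 0 := ne_of_gt (mul_pos hvpos (by linarith))
  have hGd : HasDerivAt pqG
      ((((-1 * ((1:ℝ)/3) * (1 - c) ^ ((1:ℝ)/3 - 1)) * (3 + c) + ((1 - c) ^ ((1:ℝ)/3)) * 1) * (((1 + c) ^ ((1:ℝ)/3)) * (3 - c))
        - (((1 - c) ^ ((1:ℝ)/3)) * (3 + c)) * ((1 * ((1:ℝ)/3) * (1 + c) ^ ((1:ℝ)/3 - 1)) * (3 - c) + ((1 + c) ^ ((1:ℝ)/3)) * (-1)))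
        / (((1 + c) ^ ((1:ℝ)/3)) * (3 - c)) ^ 2) c := by
    have := hN.div hD hDne
    exact this
  have hgc : HasDerivAt (fun x : ℝ => pqG ((1 - x ^ 3) ^ ((1:ℝ)/2)))
      (((((-1 * ((1:ℝ)/3) * (1 - c) ^ ((1:ℝ)/3 - 1)) * (3 + c) + ((1 - c) ^ ((1:ℝ)/3)) * 1) * (((1 + c) ^ ((1:ℝ)/3)) * (3 - c))
        - (((1 - c) ^ ((1:ℝ)/3)) * (3 + c)) * ((1 * ((1:ℝ)/3) * (1 + c) ^ ((1:ℝ)/3 - 1)) * (3 - c) + ((1 + c) ^ ((1:ℝ)/3)) * (-1)))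
        / (((1 + c) ^ ((1:ℝ)/3)) * (3 - c)) ^ 2) * (-(3 * σ ^ 2) * ((1:ℝ)/2) * (1 - σ ^ 3) ^ ((1:ℝ)/2 - 1))) σ := by
    have := hGd.comp σ hcd
    simpa [Function.comp_def] using this
  -- FTC for F₁ at pqG c
  have hg0 : 0 < pqG c := pqG_pos hcpos.le hclt1
  have hg1 : pqG c < 1 := pqG_lt_one hcpos hclt1.le
  have hg3 : 0 < 1 - pqG c ^ 3 := by
    rw [one_sub_pqG_cube hcpos.le hclt1.le]
    have h3 : (0:ℝ) < 3 - c := by linarith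
    positivity
  have hmeas1 : StronglyMeasurableAtFilter
      (fun t : ℝ => (1 - t ^ 3) ^ (-(2/3) : ℝ)) (nhds (pqG c)) volume :=
    ⟨Set.univ, Filter.univ_mem, ((by fun_prop : Measurable
      (fun t : ℝ => (1 - t ^ 3) ^ (-(2/3) : ℝ))).aestronglyMeasurable)⟩
  have hcont1 : ContinuousAt (fun t : ℝ => (1 - t ^ 3) ^ (-(2/3) : ℝ)) (pqG c) :=
    ContinuousAt.rpow_const (by fun_prop) (Or.inl hg3.ne')
  have hFTC1 : HasDerivAt (fun s : ℝ => ∫ t in (0:ℝ)..s, (1 - t ^ 3) ^ (-(2/3) : ℝ))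
      ((1 - pqG c ^ 3) ^ (-(2/3) : ℝ)) (pqG c) :=
    intervalIntegral.integral_hasDerivAt_right
      (integ_sub _ (by norm_num) (by norm_num) (by norm_num) ⟨hg0.le, hg1.le⟩)
      hmeas1 hcont1
  have hPhi := hFTC1.comp σ hgc
  -- FTC for F₂ at σ
  have hmeas2 : StronglyMeasurableAtFilter
      (fun t : ℝ => (1 - t ^ 3) ^ (-(1/2) : ℝ)) (nhds σ) volume :=
    ⟨Set.univ, Filter.univ_mem, ((by fun_prop : Measurable
      (fun t : ℝ => (1 - t ^ 3) ^ (-(1/2) : ℝ))).aestronglyMeasurable)⟩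
  have hcont2 : ContinuousAt (fun t : ℝ => (1 - t ^ 3) ^ (-(1/2) : ℝ)) σ :=
    ContinuousAt.rpow_const (by fun_prop) (Or.inl hσ3.ne')
  have hFTC2 : HasDerivAt (fun s : ℝ => ∫ t in (0:ℝ)..s, (1 - t ^ 3) ^ (-(1/2) : ℝ))
      ((1 - σ ^ 3) ^ (-(1/2) : ℝ)) σ :=
    intervalIntegral.integral_hasDerivAt_right
      (integ_sub _ (by norm_num) (by norm_num) (by norm_num) ⟨h0.le, h1.le⟩)
      hmeas2 hcont2
  have hcomb := hPhi.sub ((hFTC2.const_mul ((2:ℝ) ^ ((1:ℝ)/3))))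
  have hzero : (1 - pqG c ^ 3) ^ (-(2/3) : ℝ) *
      (((((-1 * ((1:ℝ)/3) * (1 - c) ^ ((1:ℝ)/3 - 1)) * (3 + c) + ((1 - c) ^ ((1:ℝ)/3)) * 1) * (((1 + c) ^ ((1:ℝ)/3)) * (3 - c))
        - (((1 - c) ^ ((1:ℝ)/3)) * (3 + c)) * ((1 * ((1:ℝ)/3) * (1 + c) ^ ((1:ℝ)/3 - 1)) * (3 - c) + ((1 + c) ^ ((1:ℝ)/3)) * (-1)))
        / (((1 + c) ^ ((1:ℝ)/3)) * (3 - c)) ^ 2) * (-(3 * σ ^ 2) * ((1:ℝ)/2) * (1 - σ ^ 3) ^ ((1:ℝ)/2 - 1)))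
      - (2:ℝ) ^ ((1:ℝ)/3) * (1 - σ ^ 3) ^ (-(1/2) : ℝ) = 0 := by
    have h3c : (0:ℝ) < 3 - c := by linarith
    have hden : ((((1:ℝ) + c) ^ ((1:ℝ)/3)) * (3 - c)) ^ 3 = (1 + c) * (3 - c) ^ 3 := by
      rw [mul_pow, hv3]
    have hnum : (2 * ((2:ℝ) ^ ((1:ℝ)/3)) * c) ^ 3 = 16 * c ^ 3 := by
      rw [mul_pow, mul_pow, he3]; ring
    have hw : 1 - pqG c ^ 3 =
        (2 * ((2:ℝ) ^ ((1:ℝ)/3)) * c / (((1 + c) ^ ((1:ℝ)/3)) * (3 - c))) ^ 3 := by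
      rw [one_sub_pqG_cube hcpos.le hclt1.le, div_pow, hden, hnum]
    rw [hw, cube_neg_two_thirds (by positivity),
      rpow_third_sub_one (show (0:ℝ) < 1 - c by linarith),
      rpow_third_sub_one (show (0:ℝ) < 1 + c by linarith),
      rpow_half_sub_one hσ3,
      show (-(1/2) : ℝ) = -((1:ℝ)/2) by norm_num, rpow_neg hσ3.le,
      ← hcdef, ← huv]
    exact final_algebra _ _ _ c hupos hvpos hepos hcpos hclt1 hu3 hv3 he3
  rw [hzero] at hcomb
  exact hcomb

lemma cf_mem {x : ℝ} (hx : x ∈ Icc (0:ℝ) 1) : (1 - x ^ 3) ^ ((1:ℝ)/2) ∈ Icc (0:ℝ) 1 := by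
  constructor
  · exact rpow_nonneg (by nlinarith [pow_le_one₀ hx.1 hx.2 (n := 3)]) _
  · exact rpow_le_one (by nlinarith [pow_le_one₀ hx.1 hx.2 (n := 3)])
      (by nlinarith [pow_nonneg hx.1 3]) (by norm_num)

lemma comp_continuousOn :
    ContinuousOn (fun x : ℝ =>
      ∫ t in (0:ℝ)..pqG ((1 - x ^ 3) ^ ((1:ℝ)/2)), (1 - t ^ 3) ^ (-(2/3) : ℝ))
      (Icc (0:ℝ) 1) := by
  have hcf : ContinuousOn (fun x : ℝ => (1 - x ^ 3) ^ ((1:ℝ)/2)) (Icc (0:ℝ) 1) := by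
    apply ContinuousOn.rpow_const (by fun_prop)
    exact fun x _ => Or.inr (by norm_num)
  have hpqG : ContinuousOn pqG (Icc (0:ℝ) 1) := by
    unfold pqG
    apply ContinuousOn.div
    · exact (ContinuousOn.rpow_const (by fun_prop) fun c _ => Or.inr (by norm_num)).mul
        (by fun_prop)
    · exact (ContinuousOn.rpow_const (by fun_prop) fun c _ => Or.inr (by norm_num)).mul
        (by fun_prop)
    · intro c hc
      exact ne_of_gt (pqG_denom_pos hc.1 hc.2)
  have hmaps1 : MapsTo (fun x : ℝ => (1 - x ^ 3) ^ ((1:ℝ)/2)) (Icc (0:ℝ) 1) (Icc (0:ℝ) 1) :=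
    fun x hx => cf_mem hx
  have hmaps2 : MapsTo pqG (Icc (0:ℝ) 1) (Icc (0:ℝ) 1) :=
    fun c hc => ⟨pqG_nonneg hc.1 hc.2, pqG_le_one hc.1 hc.2⟩
  exact (primitive_continuousOn _ (by norm_num) (by norm_num)).comp
    (hpqG.comp hcf hmaps1) (hmaps2.comp hmaps1)

lemma key_eq {σ : ℝ} (hσ : σ ∈ Icc (0:ℝ) 1) :
    (∫ t in (0:ℝ)..pqG ((1 - σ ^ 3) ^ ((1:ℝ)/2)), (1 - t ^ 3) ^ (-(2/3) : ℝ))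
      = 2 ^ ((1:ℝ)/3) * ∫ t in (0:ℝ)..σ, (1 - t ^ 3) ^ (-(1/2) : ℝ) := by
  set h : ℝ → ℝ := fun x =>
    (∫ t in (0:ℝ)..pqG ((1 - x ^ 3) ^ ((1:ℝ)/2)), (1 - t ^ 3) ^ (-(2/3) : ℝ))
      - 2 ^ ((1:ℝ)/3) * ∫ t in (0:ℝ)..x, (1 - t ^ 3) ^ (-(1/2) : ℝ) with hh
  suffices hs : ∀ x ∈ Icc (0:ℝ) 1, h x = 0 by
    have := hs σ hσ
    rw [hh] at this
    simp only at this
    linarith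
  have hcont : ContinuousOn h (Icc (0:ℝ) 1) := by
    apply comp_continuousOn.sub
    exact continuousOn_const.mul
      (primitive_continuousOn (-(1/2) : ℝ) (by norm_num) (by norm_num))
  have hzero0 : h 0 = 0 := by
    rw [hh]
    have h1 : ((1:ℝ) - 0 ^ 3) ^ ((1:ℝ)/2) = 1 := by norm_num
    have h2 : pqG 1 = 0 := by
      rw [pqG]
      norm_num [zero_rpow]
    simp [h1, h2]
  have hconst : ∀ a ∈ Ioo (0:ℝ) 1, ∀ x ∈ Icc a 1, h x = h a := by
    intro a ha x hx
    apply constant_of_has_deriv_right_zero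
      (hcont.mono (Icc_subset_Icc ha.1.le le_rfl))
    · intro z hz
      have hz' : 0 < z := lt_of_lt_of_le ha.1 hz.1
      exact ((key_hasDerivAt z hz' hz.2).hasDerivWithinAt)
    · exact hx
  -- h is constant = h 1 on Ioo 0 1
  have hval : ∀ a ∈ Ioo (0:ℝ) 1, h a = h 1 := by
    intro a ha
    exact (hconst a ha 1 ⟨ha.2.le, le_rfl⟩).symm
  -- limit argument: h 0 = h 1
  have hnebot : (nhdsWithin (0:ℝ) (Ioo 0 1)).NeBot := by
    rw [← mem_closure_iff_nhdsWithin_neBot, closure_Ioo (by norm_num : (0:ℝ) ≠ 1)]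
    exact ⟨le_rfl, by norm_num⟩
  have ht1 : Filter.Tendsto h (nhdsWithin (0:ℝ) (Ioo 0 1)) (nhds (h 0)) :=
    (hcont.continuousWithinAt ⟨le_rfl, by norm_num⟩).mono Ioo_subset_Icc_self
  have ht2 : Filter.Tendsto h (nhdsWithin (0:ℝ) (Ioo 0 1)) (nhds (h 1)) := by
    apply Filter.Tendsto.congr' _ tendsto_const_nhds
    filter_upwards [self_mem_nhdsWithin] with a ha
    exact (hval a ha).symm
  have h10 : h 1 = 0 := by
    have := tendsto_nhds_unique ht1 ht2
    rw [← this, hzero0]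
  intro x hx
  rcases eq_or_lt_of_le hx.1 with h0 | h0
  · rw [← h0]; exact hzero0
  · rcases eq_or_lt_of_le hx.2 with h1 | h1
    · rw [h1]; exact h10
    · rw [hval x ⟨h0, h1⟩, h10]

/-- Intermediate identity in the proof of Theorem 1:
sin_{3/2,3}(2y) = (1-C)^{1/3}(3+C)/((1+C)^{1/3}(3-C)) with C = cos_{2,3}(2^{2/3}y). -/
theorem sin323_double_in_terms_of_C
    (F₁ F₂ : ℝ → ℝ)
    (hF₁ : ∀ s, F₁ s = ∫ t in (0:ℝ)..s, (1 - t ^ 3) ^ (-(2/3) : ℝ))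
    (hF₂ : ∀ s, F₂ s = ∫ t in (0:ℝ)..s, (1 - t ^ 3) ^ (-(1/2) : ℝ))
    (pi323 : ℝ) (hpi : pi323 = 2 * F₁ 1)
    (y : ℝ) (hy : y ∈ Set.Icc 0 (pi323 / 4))
    (S σ : ℝ) (hS : S ∈ Set.Icc (0:ℝ) 1) (hσ : σ ∈ Set.Icc (0:ℝ) 1)
    (hFS : F₁ S = 2 * y) (hFσ : F₂ σ = 2 ^ ((2:ℝ)/3) * y)
    (C : ℝ) (hC : C = (1 - σ ^ 3) ^ ((1:ℝ)/2)) :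
    S = (1 - C) ^ ((1:ℝ)/3) * (3 + C) / ((1 + C) ^ ((1:ℝ)/3) * (3 - C)) := by
  have hCmem : C ∈ Icc (0:ℝ) 1 := hC ▸ cf_mem hσ
  have hGmem : pqG C ∈ Icc (0:ℝ) 1 :=
    ⟨pqG_nonneg hCmem.1 hCmem.2, pqG_le_one hCmem.1 hCmem.2⟩
  have h2 : (2:ℝ) ^ ((1:ℝ)/3) * 2 ^ ((2:ℝ)/3) = 2 := by
    rw [← rpow_add (by norm_num : (0:ℝ) < 2)]; norm_num
  have hFg : (∫ t in (0:ℝ)..pqG C, (1 - t ^ 3) ^ (-(2/3) : ℝ))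
      = ∫ t in (0:ℝ)..S, (1 - t ^ 3) ^ (-(2/3) : ℝ) := by
    rw [hC, key_eq hσ, ← hF₂ σ, hFσ, ← hF₁ S, hFS, ← mul_assoc, h2]
  have hinj := (primitive_strictMonoOn (-(2/3) : ℝ) (by norm_num) (by norm_num)).injOn
  have : pqG C = S := hinj hGmem hS hFg
  rw [← this, pqG]
end

section
/- Let F₁(s) = ∫₀ˢ (1 − t³)^{−2/3} dt and F₂(s) = ∫₀ˢ (1 − t³)^{−1/2} dt for s ∈ [0,1], with π_{3/2,3} = 2F₁(1). For every y ∈ [0, π_{3/2,3}/4], if S, σ ∈ [0,1] satisfy F₁(S) = 2y and F₂(σ) = 2^{2/3}·y, and C = (1 − σ³)^{1/2}, then (1 − S³)^{1/3} = 2^{4/3}·C / ((1 + C)^{1/3}·(3 − C)). -/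
open Set MeasureTheory intervalIntegral Real Filter Topology

namespace Cos323

noncomputable def f (r : ℝ) (t : ℝ) : ℝ := (1 - t ^ 3) ^ r

lemma f_meas (r : ℝ) : Measurable (f r) := by
  unfold f
  exact (measurable_const.sub ((measurable_id.pow_const 3))).pow measurable_const

lemma f_contAt {r t : ℝ} (ht : t < 1) : ContinuousAt (f r) t := by
  have h : (0:ℝ) < 1 - t ^ 3 := by nlinarith [sq_nonneg t, sq_nonneg (t+1), sq_nonneg (t-1)]
  exact ((continuous_const.sub (continuous_id.pow 3)).continuousAt).rpow_const (Or.inl h.ne')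

lemma f_pos {r t : ℝ} (ht : t < 1) : 0 < f r t := by
  have h : (0:ℝ) < 1 - t ^ 3 := by nlinarith [sq_nonneg t, sq_nonneg (t+1), sq_nonneg (t-1)]
  exact Real.rpow_pos_of_pos h r

lemma f_intInt {r : ℝ} (hr : -1 < r) (hr0 : r < 0) :
    IntervalIntegrable (f r) volume 0 1 := by
  have hg : IntervalIntegrable (fun t : ℝ => (1 - t) ^ r) volume 0 1 := by
    have := (intervalIntegrable_rpow' (a := 1) (b := 0) hr).comp_sub_left 1
    simpa using this
  refine hg.mono_fun' ((f_meas r).aestronglyMeasurable) ?_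
  rw [Filter.EventuallyLE, ae_restrict_iff' measurableSet_uIoc]
  refine Filter.Eventually.of_forall fun t ht => ?_
  rw [Set.uIoc_of_le (by norm_num : (0:ℝ) ≤ 1)] at ht
  obtain ⟨ht0, ht1⟩ := ht
  rcases eq_or_lt_of_le ht1 with h1 | h1
  · subst h1
    simp [f, Real.zero_rpow hr0.ne]
  · have hcube : t ^ 3 ≤ t := by
      calc t ^ 3 ≤ t ^ 1 := pow_le_pow_of_le_one ht0.le ht1 (by norm_num)
      _ = t := pow_one t
    have h3 : (0:ℝ) < 1 - t ^ 3 := by linarith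
    have hle : 1 - t ≤ 1 - t ^ 3 := by linarith
    have := Real.rpow_le_rpow_of_nonpos (by linarith : (0:ℝ) < 1 - t) hle hr0.le
    rw [Real.norm_eq_abs, abs_of_nonneg (le_of_lt (f_pos h1))]
    exact this

lemma f_intInt' {r : ℝ} (hr : -1 < r) (hr0 : r < 0) {a b : ℝ}
    (ha : a ∈ Icc (0:ℝ) 1) (hb : b ∈ Icc (0:ℝ) 1) :
    IntervalIntegrable (f r) volume a b :=
  (f_intInt hr hr0).mono_set (Set.uIcc_subset_uIcc
    (by rw [Set.uIcc_of_le (by norm_num : (0:ℝ) ≤ 1)]; exact ha)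
    (by rw [Set.uIcc_of_le (by norm_num : (0:ℝ) ≤ 1)]; exact hb))

noncomputable def F (r : ℝ) (s : ℝ) : ℝ := ∫ t in (0:ℝ)..s, f r t

lemma F_cont {r : ℝ} (hr : -1 < r) (hr0 : r < 0) :
    ContinuousOn (F r) (Icc 0 1) := by
  have := continuousOn_primitive_interval' (μ := volume) (f := f r) (f_intInt hr hr0)
    (by rw [Set.uIcc_of_le (by norm_num : (0:ℝ) ≤ 1)]; exact ⟨le_refl _, by norm_num⟩)
  rwa [Set.uIcc_of_le (by norm_num : (0:ℝ) ≤ 1)] at this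

lemma F_strictMono {r : ℝ} (hr : -1 < r) (hr0 : r < 0) :
    StrictMonoOn (F r) (Icc 0 1) := by
  intro a ha b hb hab
  have key : 0 < ∫ t in a..b, f r t := by
    refine intervalIntegral_pos_of_pos_on (f_intInt' hr hr0 ha hb) (fun x hx => ?_) hab
    exact f_pos (lt_of_lt_of_le hx.2 hb.2)
  have hsplit : F r b = F r a + ∫ t in a..b, f r t := by
    rw [F, F, ← intervalIntegral.integral_add_adjacent_intervals
      (f_intInt' hr hr0 ⟨le_refl 0, by norm_num⟩ ha) (f_intInt' hr hr0 ha hb)]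
  linarith

lemma F_hasDeriv {r : ℝ} (hr : -1 < r) (hr0 : r < 0) {b : ℝ} (hb0 : 0 ≤ b) (hb : b < 1) :
    HasDerivAt (F r) (f r b) b :=
  integral_hasDerivAt_right (f_intInt' hr hr0 ⟨le_refl 0, by norm_num⟩ ⟨hb0, hb.le⟩)
    ((f_meas r).aestronglyMeasurable.stronglyMeasurableAtFilter) (f_contAt hb)




lemma rpow_third_cube {a : ℝ} (ha : 0 ≤ a) : (a ^ ((1:ℝ)/3)) ^ 3 = a := by
  rw [← Real.rpow_natCast (a ^ ((1:ℝ)/3)) 3, ← Real.rpow_mul ha]; norm_num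

lemma rpow_half_sq {a : ℝ} (ha : 0 ≤ a) : (a ^ ((1:ℝ)/2)) ^ 2 = a := by
  rw [← Real.rpow_natCast (a ^ ((1:ℝ)/2)) 2, ← Real.rpow_mul ha]; norm_num

lemma cube_inj {a b : ℝ} (ha : 0 ≤ a) (hb : 0 ≤ b) (h : a ^ 3 = b ^ 3) : a = b :=
  (pow_left_strictMonoOn₀ (M₀ := ℝ) (n := 3) (by norm_num)).injOn ha hb h

noncomputable def ψ (x : ℝ) : ℝ := ((1 - x)/(1 + x)) ^ ((1:ℝ)/3) * ((3 + x)/(3 - x))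

lemma psi_cube {x : ℝ} (hx0 : 0 ≤ x) (hx1 : x ≤ 1) :
    (ψ x) ^ 3 = (1 - x) * (3 + x) ^ 3 / ((1 + x) * (3 - x) ^ 3) := by
  have hu : (0:ℝ) ≤ (1 - x)/(1 + x) := div_nonneg (by linarith) (by linarith)
  rw [ψ, mul_pow, rpow_third_cube hu, div_pow, div_mul_div_comm]

lemma one_sub_psi_cube {x : ℝ} (hx0 : 0 ≤ x) (hx1 : x ≤ 1) :
    1 - (ψ x) ^ 3 = 16 * x ^ 3 / ((1 + x) * (3 - x) ^ 3) := by
  rw [psi_cube hx0 hx1]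
  have h2 : (1 + x) ≠ 0 := by intro h; linarith
  have h3 : (3 - x) ≠ 0 := by intro h; linarith
  field_simp
  ring

lemma psi_nonneg {x : ℝ} (hx0 : 0 ≤ x) (hx1 : x ≤ 1) : 0 ≤ ψ x := by
  have hu : (0:ℝ) ≤ (1 - x)/(1 + x) := div_nonneg (by linarith) (by linarith)
  have : (0:ℝ) ≤ (3 + x)/(3 - x) := div_nonneg (by linarith) (by linarith)
  exact mul_nonneg (Real.rpow_nonneg hu _) this

lemma psi_le_one {x : ℝ} (hx0 : 0 ≤ x) (hx1 : x ≤ 1) : ψ x ≤ 1 := by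
  by_contra h
  push_neg at h
  have h3 : (1:ℝ) < (ψ x) ^ 3 := one_lt_pow₀ h (by norm_num)
  have := one_sub_psi_cube hx0 hx1
  have hpos : (0:ℝ) ≤ 16 * x ^ 3 / ((1 + x) * (3 - x) ^ 3) := by
    apply div_nonneg (by nlinarith [pow_nonneg hx0 3])
    nlinarith [pow_nonneg (show (0:ℝ) ≤ 3 - x by linarith) 3]
  linarith

lemma psi_lt_one {x : ℝ} (hx0 : 0 < x) (hx1 : x ≤ 1) : ψ x < 1 := by
  rcases lt_or_eq_of_le (psi_le_one hx0.le hx1) with h | h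
  · exact h
  · exfalso
    have := one_sub_psi_cube hx0.le hx1
    rw [h] at this
    have hpos : (0:ℝ) < 16 * x ^ 3 / ((1 + x) * (3 - x) ^ 3) := by
      apply div_pos (by nlinarith [pow_pos hx0 3])
      apply mul_pos (by linarith)
      exact pow_pos (by linarith) 3
    simp at this
    linarith

lemma psi_continuousOn : ContinuousOn ψ (Icc 0 1) := by
  have h1 : ContinuousOn (fun x : ℝ => (1 - x)/(1 + x)) (Icc 0 1) := by
    apply ContinuousOn.div (by fun_prop) (by fun_prop)
    intro x hx; have := hx.1; intro h; linarith
  have h2 : ContinuousOn (fun x : ℝ => ((1 - x)/(1 + x)) ^ ((1:ℝ)/3)) (Icc 0 1) :=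
    h1.rpow_const (fun x _ => Or.inr (by norm_num))
  have h3 : ContinuousOn (fun x : ℝ => (3 + x)/(3 - x)) (Icc 0 1) := by
    apply ContinuousOn.div (by fun_prop) (by fun_prop)
    intro x hx; have := hx.2; intro h; linarith
  exact h2.mul h3

noncomputable def Dψ (x : ℝ) : ℝ :=
  ((1 - x)/(1 + x)) ^ ((1:ℝ)/3) *
    (-(2/3) * ((3 + x)/(3 - x)) / ((1 - x) * (1 + x)) + 6 / (3 - x) ^ 2)

lemma hasDerivAt_psi {x : ℝ} (hx0 : 0 < x) (hx1 : x < 1) : HasDerivAt ψ (Dψ x) x := by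
  have h1x : (0:ℝ) < 1 - x := by linarith
  have h1x' : (0:ℝ) < 1 + x := by linarith
  have h3x : (0:ℝ) < 3 - x := by linarith
  have hu : HasDerivAt (fun y : ℝ => (1 - y)/(1 + y)) (-2/(1 + x) ^ 2) x := by
    have h := ((hasDerivAt_id x).const_sub 1).div ((hasDerivAt_id x).const_add 1) h1x'.ne'
    refine h.congr_deriv (Eq.symm ?_)
    simp only [id]
    field_simp
    ring
  have hupos : (0:ℝ) < (1 - x)/(1 + x) := by positivity
  have hw : HasDerivAt (fun y : ℝ => ((1 - y)/(1 + y)) ^ ((1:ℝ)/3))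
      (-2/(1 + x) ^ 2 * (1/3) * ((1 - x)/(1 + x)) ^ ((1:ℝ)/3 - 1)) x :=
    hu.rpow_const (Or.inl hupos.ne')
  have hv : HasDerivAt (fun y : ℝ => (3 + y)/(3 - y)) (6/(3 - x) ^ 2) x := by
    have h := ((hasDerivAt_id x).const_add 3).div ((hasDerivAt_id x).const_sub 3) h3x.ne'
    refine h.congr_deriv (Eq.symm ?_)
    simp only [id]
    field_simp
    ring
  have := hw.mul hv
  refine this.congr_deriv (Eq.symm ?_)
  rw [Dψ, Real.rpow_sub hupos, Real.rpow_one]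
  field_simp



noncomputable def D (x : ℝ) : ℝ :=
  -(2 * (2:ℝ) ^ ((1:ℝ)/3) / 3) * (((1 - x ^ 2) ^ ((1:ℝ)/3)) ^ 2)⁻¹

lemma cube_root_cube {a : ℝ} (ha : 0 ≤ a) : (a ^ 3) ^ ((1:ℝ)/3) = a := by
  rw [← Real.rpow_natCast a 3, ← Real.rpow_mul ha]
  norm_num

lemma key_G_deriv {x : ℝ} (hx0 : 0 < x) (hx1 : x < 1) :
    HasDerivAt (fun y => F (-(2/3)) (ψ y)) (D x) x := by
  have h1x : (0:ℝ) < 1 - x := by linarith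
  have h1x' : (0:ℝ) < 1 + x := by linarith
  have h3x : (0:ℝ) < 3 - x := by linarith
  have hψ := hasDerivAt_psi hx0 hx1
  have hF : HasDerivAt (F (-(2/3))) (f (-(2/3)) (ψ x)) (ψ x) :=
    F_hasDeriv (by norm_num) (by norm_num) (psi_nonneg hx0.le hx1.le) (psi_lt_one hx0 hx1.le)
  have hcomp := hF.comp x hψ
  refine hcomp.congr_deriv (Eq.symm ?_)
  -- now prove D x = f (-(2/3)) (ψ x) * Dψ x
  set p := (1 + x) ^ ((1:ℝ)/3) with hp
  set q := (1 - x) ^ ((1:ℝ)/3) with hq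
  set c := (2:ℝ) ^ ((1:ℝ)/3) with hc
  have hppos : 0 < p := Real.rpow_pos_of_pos h1x' _
  have hqpos : 0 < q := Real.rpow_pos_of_pos h1x _
  have hcpos : 0 < c := Real.rpow_pos_of_pos (by norm_num) _
  have hp3 : p ^ 3 = 1 + x := rpow_third_cube h1x'.le
  have hq3 : q ^ 3 = 1 - x := rpow_third_cube h1x.le
  have hc3 : c ^ 3 = 2 := rpow_third_cube (by norm_num)
  have hw : ((1 - x)/(1 + x)) ^ ((1:ℝ)/3) = q / p := Real.div_rpow h1x.le h1x'.le _
  have hs : (1 - x ^ 2) ^ ((1:ℝ)/3) = p * q := by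
    rw [show (1 - x ^ 2 : ℝ) = (1 + x) * (1 - x) by ring, Real.mul_rpow h1x'.le h1x.le]
  set B := 2 * c * x / (p * (3 - x)) with hB
  have hBpos : 0 < B := by
    apply div_pos (by positivity) (mul_pos hppos h3x)
  have hAB : 16 * x ^ 3 / ((1 + x) * (3 - x) ^ 3) = B ^ 3 := by
    rw [hB]
    rw [div_pow]
    rw [div_eq_div_iff (by positivity) (by positivity)]
    linear_combination (16 * x ^ 3 * (3 - x) ^ 3) * hp3 - (8 * x ^ 3 * (1 + x) * (3 - x) ^ 3) * hc3
  have hfv : f (-(2/3)) (ψ x) = (B ^ 2)⁻¹ := by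
    rw [f, one_sub_psi_cube hx0.le hx1.le, hAB]
    rw [show (-(2/3) : ℝ) = 3 * (-(2/3)) / 3 by norm_num]
    rw [← Real.rpow_natCast B 3, ← Real.rpow_mul hBpos.le]
    rw [show ((3:ℕ):ℝ) * (3 * (-(2/3)) / 3) = -2 by norm_num]
    rw [Real.rpow_neg hBpos.le, ← Real.rpow_natCast B 2]
    norm_num
  have hbr : -(2/3) * ((3 + x)/(3 - x)) / ((1 - x) * (1 + x)) + 6 / (3 - x) ^ 2
      = -(16/3) * x ^ 2 / ((1 - x ^ 2) * (3 - x) ^ 2) := by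
    have hA : ((1:ℝ) - x ^ 2) ≠ 0 := by nlinarith
    field_simp [h1x.ne', h1x'.ne', h3x.ne', hA]
    ring
  rw [Dψ, hw, hbr, D, hs, hfv]
  have hpq : (1 - x ^ 2 : ℝ) = p ^ 3 * q ^ 3 := by
    rw [hp3, hq3]; ring
  rw [hpq, hB]
  field_simp [hppos.ne', hqpos.ne', hcpos.ne', hx0.ne', h3x.ne']
  rw [← hc]
  linear_combination (-8) * hc3

lemma key_H_deriv {x : ℝ} (hx0 : 0 < x) (hx1 : x < 1) :
    HasDerivAt (fun y => 2 ^ ((1:ℝ)/3) * F (-(1/2)) ((1 - y ^ 2) ^ ((1:ℝ)/3))) (D x) x := by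
  have h2 : (0:ℝ) < 1 - x ^ 2 := by nlinarith
  set s := (1 - x ^ 2) ^ ((1:ℝ)/3) with hsdef
  have hspos : 0 < s := Real.rpow_pos_of_pos h2 _
  have hs3 : s ^ 3 = 1 - x ^ 2 := rpow_third_cube h2.le
  have hslt : s < 1 := by
    by_contra h
    push_neg at h
    have := one_le_pow₀ (n := 3) h
    nlinarith
  have hbase : HasDerivAt (fun y : ℝ => 1 - y ^ 2) (-(2 * x)) x := by
    have h := (hasDerivAt_pow 2 x).const_sub 1
    refine h.congr_deriv (Eq.symm ?_)
    simp
  have hσd : HasDerivAt (fun y : ℝ => (1 - y ^ 2) ^ ((1:ℝ)/3))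
      (-(2 * x) * ((1:ℝ)/3) * (1 - x ^ 2) ^ ((1:ℝ)/3 - 1)) x :=
    hbase.rpow_const (Or.inl h2.ne')
  have hF : HasDerivAt (F (-(1/2))) (f (-(1/2)) s) s :=
    F_hasDeriv (by norm_num) (by norm_num) hspos.le hslt
  have hcomp := (hF.comp x hσd).const_mul ((2:ℝ) ^ ((1:ℝ)/3))
  refine hcomp.congr_deriv (Eq.symm ?_)
  have hfv : f (-(1/2)) s = x⁻¹ := by
    rw [f, show (1 - s ^ 3 : ℝ) = x ^ 2 by rw [hs3]; ring]
    rw [← Real.rpow_natCast x 2, ← Real.rpow_mul hx0.le]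
    rw [show ((2:ℕ):ℝ) * (-(1/2)) = -1 by norm_num, Real.rpow_neg_one]
  have hpow : (1 - x ^ 2) ^ ((1:ℝ)/3 - 1) = s / s ^ 3 := by
    rw [Real.rpow_sub h2, Real.rpow_one, ← hs3, cube_root_cube hspos.le]
  rw [D, hfv, hpow, ← hsdef]
  field_simp [hspos.ne', hx0.ne']

lemma GH_eq {x : ℝ} (hx : x ∈ Icc (0:ℝ) 1) :
    F (-(2/3)) (ψ x) = 2 ^ ((1:ℝ)/3) * F (-(1/2)) ((1 - x ^ 2) ^ ((1:ℝ)/3)) := by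
  set G : ℝ → ℝ := fun y =>
    F (-(2/3)) (ψ y) - 2 ^ ((1:ℝ)/3) * F (-(1/2)) ((1 - y ^ 2) ^ ((1:ℝ)/3)) with hGdef
  have hmaps1 : MapsTo ψ (Icc 0 1) (Icc (0:ℝ) 1) := fun y hy =>
    ⟨psi_nonneg hy.1 hy.2, psi_le_one hy.1 hy.2⟩
  have hcont2 : ContinuousOn (fun y : ℝ => (1 - y ^ 2) ^ ((1:ℝ)/3)) (Icc 0 1) :=
    ContinuousOn.rpow_const (by fun_prop) (fun y _ => Or.inr (by norm_num))
  have hmaps2 : MapsTo (fun y : ℝ => (1 - y ^ 2) ^ ((1:ℝ)/3)) (Icc 0 1) (Icc (0:ℝ) 1) := by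
    intro y hy
    have h1 : (0:ℝ) ≤ 1 - y ^ 2 := by nlinarith [hy.1, hy.2]
    exact ⟨Real.rpow_nonneg h1 _,
      Real.rpow_le_one h1 (by nlinarith [hy.1]) (by norm_num)⟩
  have hGcont : ContinuousOn G (Icc 0 1) := by
    apply ContinuousOn.sub
    · exact (F_cont (r := -(2/3)) (by norm_num) (by norm_num)).comp psi_continuousOn hmaps1
    · exact ContinuousOn.mul continuousOn_const
        ((F_cont (r := -(1/2)) (by norm_num) (by norm_num)).comp hcont2 hmaps2)
  have hψ1 : ψ 1 = 0 := by
    rw [ψ]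
    norm_num
  have hG1 : G 1 = 0 := by
    simp only [hGdef, hψ1]
    norm_num [F]
  have hGzero : ∀ z ∈ Ioc (0:ℝ) 1, G z = 0 := by
    intro z hz
    have hder : ∀ t ∈ Ico z 1, HasDerivWithinAt G 0 (Ici t) t := by
      intro t ht
      have ht0 : 0 < t := lt_of_lt_of_le hz.1 ht.1
      have := (key_G_deriv ht0 ht.2).sub (key_H_deriv ht0 ht.2)
      rw [sub_self] at this
      exact this.hasDerivWithinAt
    have hc : ContinuousOn G (Icc z 1) :=
      hGcont.mono (Icc_subset_Icc hz.1.le le_rfl)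
    have h := constant_of_has_deriv_right_zero hc hder 1 ⟨hz.2, le_rfl⟩
    rw [hG1] at h
    exact h.symm
  have hGx : G x = 0 := by
    rcases eq_or_lt_of_le hx.1 with h0 | h0
    · -- x = 0 : limit argument
      have hne : (𝓝[Ioc (0:ℝ) 1] (0:ℝ)).NeBot := left_nhdsWithin_Ioc_neBot zero_lt_one
      have h1 : Filter.Tendsto G (𝓝[Ioc (0:ℝ) 1] 0) (𝓝 (G 0)) :=
        ((hGcont 0 ⟨le_rfl, zero_le_one⟩).mono Ioc_subset_Icc_self)
      have h2 : Filter.Tendsto G (𝓝[Ioc (0:ℝ) 1] 0) (𝓝 0) := by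
        refine Filter.Tendsto.congr' ?_ tendsto_const_nhds
        filter_upwards [self_mem_nhdsWithin] with z hz
        exact (hGzero z hz).symm
      have h3 := tendsto_nhds_unique h1 h2
      rw [← h0]
      exact h3
    · exact hGzero x ⟨h0, hx.2⟩
  simp only [hGdef] at hGx
  linarith [hGx]

end Cos323

open Cos323 in
/-- Intermediate identity in the proof of Theorem 1:
cos_{3/2,3}^{1/2}(2y) = 2^{4/3} C /((1+C)^{1/3}(3-C)) with C = cos_{2,3}(2^{2/3}y). -/
theorem cos323_double_in_terms_of_C
    (F₁ F₂ : ℝ → ℝ)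
    (hF₁ : ∀ s, F₁ s = ∫ t in (0:ℝ)..s, (1 - t ^ 3) ^ (-(2/3) : ℝ))
    (hF₂ : ∀ s, F₂ s = ∫ t in (0:ℝ)..s, (1 - t ^ 3) ^ (-(1/2) : ℝ))
    (pi323 : ℝ) (hpi : pi323 = 2 * F₁ 1)
    (y : ℝ) (hy : y ∈ Set.Icc 0 (pi323 / 4))
    (S σ : ℝ) (hS : S ∈ Set.Icc (0:ℝ) 1) (hσ : σ ∈ Set.Icc (0:ℝ) 1)
    (hFS : F₁ S = 2 * y) (hFσ : F₂ σ = 2 ^ ((2:ℝ)/3) * y)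
    (C : ℝ) (hC : C = (1 - σ ^ 3) ^ ((1:ℝ)/2)) :
    (1 - S ^ 3) ^ ((1:ℝ)/3) = 2 ^ ((4:ℝ)/3) * C / ((1 + C) ^ ((1:ℝ)/3) * (3 - C)) := by
  obtain ⟨hS0, hS1⟩ := hS
  obtain ⟨hσ0, hσ1⟩ := hσ
  have e1 : ∀ s, Cos323.F (-(2/3)) s = F₁ s := fun s => by rw [hF₁ s]; rfl
  have e2 : ∀ s, Cos323.F (-(1/2)) s = F₂ s := fun s => by rw [hF₂ s]; rfl
  have h1 : (0:ℝ) ≤ 1 - σ ^ 3 := by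
    have := pow_le_one₀ hσ0 hσ1 (n := 3)
    linarith
  have hC0 : 0 ≤ C := by rw [hC]; exact Real.rpow_nonneg h1 _
  have hC1 : C ≤ 1 := by
    rw [hC]
    exact Real.rpow_le_one h1 (by nlinarith [pow_nonneg hσ0 3]) (by norm_num)
  have hCsq : C ^ 2 = 1 - σ ^ 3 := by rw [hC]; exact Cos323.rpow_half_sq h1
  have hσeq : (1 - C ^ 2) ^ ((1:ℝ)/3) = σ := by
    rw [hCsq, show (1 - (1 - σ ^ 3) : ℝ) = σ ^ 3 by ring]
    exact Cos323.cube_root_cube hσ0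
  have hGH := Cos323.GH_eq (x := C) ⟨hC0, hC1⟩
  rw [hσeq] at hGH
  have h2pow : (2:ℝ) ^ ((1:ℝ)/3) * 2 ^ ((2:ℝ)/3) = 2 := by
    rw [← Real.rpow_add (by norm_num : (0:ℝ) < 2)]
    norm_num
  have hFψ : Cos323.F (-(2/3)) (ψ C) = 2 * y := by
    rw [hGH, e2, hFσ, ← mul_assoc, h2pow]
  have hmono := Cos323.F_strictMono (r := -(2/3)) (by norm_num) (by norm_num)
  have hψmem : ψ C ∈ Set.Icc (0:ℝ) 1 := ⟨psi_nonneg hC0 hC1, psi_le_one hC0 hC1⟩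
  have hSeq : S = ψ C := by
    apply hmono.injOn ⟨hS0, hS1⟩ hψmem
    rw [e1, hFS, hFψ]
  have hkey : 1 - S ^ 3 = 16 * C ^ 3 / ((1 + C) * (3 - C) ^ 3) := by
    rw [hSeq]; exact Cos323.one_sub_psi_cube hC0 hC1
  have h3C : (0:ℝ) < 3 - C := by linarith
  have h1C : (0:ℝ) < 1 + C := by linarith
  have hbase : (0:ℝ) ≤ 2 ^ ((4:ℝ)/3) * C / ((1 + C) ^ ((1:ℝ)/3) * (3 - C)) := by
    apply div_nonneg (mul_nonneg (Real.rpow_nonneg (by norm_num) _) hC0)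
    exact mul_nonneg (Real.rpow_nonneg h1C.le _) h3C.le
  have h16 : ((2:ℝ) ^ ((4:ℝ)/3)) ^ 3 = 16 := by
    rw [← Real.rpow_natCast ((2:ℝ) ^ ((4:ℝ)/3)) 3, ← Real.rpow_mul (by norm_num : (0:ℝ) ≤ 2)]
    rw [show ((4:ℝ)/3) * ((3:ℕ):ℝ) = ((4:ℕ):ℝ) by push_cast; ring, Real.rpow_natCast]
    norm_num
  have hcube : (2 ^ ((4:ℝ)/3) * C / ((1 + C) ^ ((1:ℝ)/3) * (3 - C))) ^ 3
      = 16 * C ^ 3 / ((1 + C) * (3 - C) ^ 3) := by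
    rw [div_pow, mul_pow, mul_pow, h16, Cos323.rpow_third_cube h1C.le]
  rw [hkey, ← hcube, Cos323.cube_root_cube hbase]
end

section
/- Let F₁(s) = ∫₀ˢ (1 − t²)^{−3/4} dt and F₂(s) = ∫₀ˢ (1 − t⁴)^{−1/2} dt for s ∈ [0,1], with π_{2,4} = 2F₂(1). For every x ∈ [0, π_{2,4}/2], if S, σ ∈ [0,1] satisfy F₁(S) = 2x and F₂(σ) = π_{2,4}/2 − x, then S = (1 − σ⁴)^{1/2}. -/
open MeasureTheory intervalIntegral Set Real Filter Topology

private noncomputable def g1 : ℝ → ℝ := fun t => (1 - t ^ 2) ^ (-(3/4) : ℝ)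
private noncomputable def g2 : ℝ → ℝ := fun t => (1 - t ^ 4) ^ (-(1/2) : ℝ)
private noncomputable def phi : ℝ → ℝ := fun s => (1 - s ^ 2) ^ ((1:ℝ)/4)
private noncomputable def I1 : ℝ → ℝ := fun s => ∫ t in (0:ℝ)..s, g1 t
private noncomputable def I2 : ℝ → ℝ := fun s => ∫ t in (0:ℝ)..s, g2 t
private noncomputable def H : ℝ → ℝ := fun s => I1 s + 2 * I2 (phi s)

private lemma aux_int (q : ℕ) (hq : 2 ≤ q) (r : ℝ) (hr : -1 < r) (hr0 : r < 0) :
    IntervalIntegrable (fun t : ℝ => (1 - t ^ q) ^ r) volume 0 1 := by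
  have h1 : IntervalIntegrable (fun t : ℝ => (1 - t) ^ r) volume 0 1 := by
    have := ((intervalIntegrable_rpow' (a := 0) (b := 1) hr).comp_sub_left 1).symm
    simpa using this
  have hm : Measurable (fun t : ℝ => (1 - t ^ q) ^ r) := by fun_prop
  refine h1.mono_fun hm.aestronglyMeasurable.restrict ?_
  filter_upwards [ae_restrict_mem measurableSet_uIoc] with t ht
  rw [uIoc_of_le (by norm_num : (0:ℝ) ≤ 1)] at ht
  obtain ⟨ht0, ht1⟩ := ht
  have htq : t ^ q ≤ t := by
    calc t ^ q ≤ t ^ 1 := pow_le_pow_of_le_one ht0.le ht1 (by omega)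
    _ = t := pow_one t
  have h1t : (0:ℝ) ≤ 1 - t ^ q := by nlinarith [pow_nonneg ht0.le q]
  rw [Real.norm_eq_abs, Real.norm_eq_abs, abs_of_nonneg (rpow_nonneg h1t r),
    abs_of_nonneg (rpow_nonneg (by linarith : (0:ℝ) ≤ 1 - t) r)]
  rcases eq_or_lt_of_le ht1 with h | h
  · subst h; simp [Real.zero_rpow hr0.ne]
  · exact rpow_le_rpow_of_nonpos (by linarith) (by linarith) hr0.le

private lemma int_g1 : IntervalIntegrable g1 volume 0 1 :=
  aux_int 2 le_rfl _ (by norm_num) (by norm_num)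

private lemma int_g2 : IntervalIntegrable g2 volume 0 1 :=
  aux_int 4 (by norm_num) _ (by norm_num) (by norm_num)

private lemma int_g1' {a b : ℝ} (ha : a ∈ Icc (0:ℝ) 1) (hb : b ∈ Icc (0:ℝ) 1) :
    IntervalIntegrable g1 volume a b :=
  int_g1.mono_set (by rw [uIcc_of_le (by norm_num : (0:ℝ) ≤ 1)]; exact uIcc_subset_Icc ha hb)

private lemma int_g2' {a b : ℝ} (ha : a ∈ Icc (0:ℝ) 1) (hb : b ∈ Icc (0:ℝ) 1) :
    IntervalIntegrable g2 volume a b :=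
  int_g2.mono_set (by rw [uIcc_of_le (by norm_num : (0:ℝ) ≤ 1)]; exact uIcc_subset_Icc ha hb)

private lemma mono_I2 : StrictMonoOn I2 (Icc 0 1) := by
  intro a ha b hb hab
  have key : (0:ℝ) < ∫ t in a..b, g2 t := by
    refine intervalIntegral_pos_of_pos_on (int_g2' ha hb) (fun t ht => ?_) hab
    have h1 : 0 < 1 - t ^ 4 := by
      have ht0 : 0 ≤ t := le_trans ha.1 ht.1.le
      have ht1 : t < 1 := lt_of_lt_of_le ht.2 hb.2
      have : t ^ 4 < 1 := pow_lt_one₀ ht0 ht1 (by norm_num)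
      linarith
    exact rpow_pos_of_pos h1 _
  have h := integral_add_adjacent_intervals (int_g2' (left_mem_Icc.mpr zero_le_one) ha)
    (int_g2' ha hb)
  simp only [I2]
  linarith [h]

private lemma phi_mem {s : ℝ} (hs : s ∈ Icc (0:ℝ) 1) : phi s ∈ Icc (0:ℝ) 1 := by
  constructor
  · exact rpow_nonneg (by nlinarith [hs.1, hs.2] : (0:ℝ) ≤ 1 - s ^ 2) _
  · exact rpow_le_one (by nlinarith [hs.1, hs.2]) (by nlinarith [hs.1]) (by norm_num)

private lemma phi_pow4 {s : ℝ} (hs : s ∈ Icc (0:ℝ) 1) : (phi s) ^ 4 = 1 - s ^ 2 := by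
  have h : (0:ℝ) ≤ 1 - s ^ 2 := by nlinarith [hs.1, hs.2]
  rw [phi, ← rpow_natCast ((1 - s^2) ^ ((1:ℝ)/4)) 4, ← rpow_mul h]
  norm_num

private lemma phi_cont : Continuous phi := by
  rw [continuous_iff_continuousAt]
  intro x
  exact ((continuous_const.sub (continuous_pow 2)).continuousAt).rpow_const (Or.inr (by norm_num))

private lemma H_deriv {s : ℝ} (hs : s ∈ Ioo (0:ℝ) 1) : HasDerivAt H 0 s := by
  obtain ⟨hs0, hs1⟩ := hs
  have hs2 : 0 < 1 - s ^ 2 := by nlinarith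
  have hs2' : 1 - s ^ 2 < 1 := by nlinarith
  have hphi : phi s ∈ Ioo (0:ℝ) 1 :=
    ⟨rpow_pos_of_pos hs2 _, rpow_lt_one hs2.le hs2' (by norm_num)⟩
  have hm1 : Measurable g1 := by unfold g1; fun_prop
  have hm2 : Measurable g2 := by unfold g2; fun_prop
  have hd1 : HasDerivAt I1 (g1 s) s := by
    refine integral_hasDerivAt_right
      (int_g1' (left_mem_Icc.mpr zero_le_one) ⟨hs0.le, hs1.le⟩)
      ⟨univ, univ_mem, hm1.aestronglyMeasurable.restrict⟩ ?_
    exact ((continuous_const.sub (continuous_pow 2)).continuousAt).rpow_const (Or.inl hs2.ne')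
  have hphi4 : 1 - (phi s) ^ 4 = s ^ 2 := by
    rw [phi_pow4 ⟨hs0.le, hs1.le⟩]; ring
  have hd2 : HasDerivAt I2 (g2 (phi s)) (phi s) := by
    refine integral_hasDerivAt_right
      (int_g2' (left_mem_Icc.mpr zero_le_one) ⟨hphi.1.le, hphi.2.le⟩)
      ⟨univ, univ_mem, hm2.aestronglyMeasurable.restrict⟩ ?_
    refine ((continuous_const.sub (continuous_pow 4)).continuousAt).rpow_const (Or.inl ?_)
    show 1 - (phi s) ^ 4 ≠ 0
    rw [hphi4]; positivity
  have hdphi : HasDerivAt phi ((1:ℝ)/4 * (1 - s ^ 2) ^ ((1:ℝ)/4 - 1) * (-2 * s)) s := by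
    have hbase : HasDerivAt (fun u : ℝ => 1 - u ^ 2) (-2 * s) s := by
      have := ((hasDerivAt_pow 2 s).const_sub 1)
      simpa using this.congr_deriv (by ring)
    have h := (hbase.rpow_const (p := (1:ℝ)/4) (Or.inl hs2.ne'))
    exact (h.congr_deriv (by ring))
  have hcomp : HasDerivAt (fun u => I2 (phi u))
      (g2 (phi s) * ((1:ℝ)/4 * (1 - s ^ 2) ^ ((1:ℝ)/4 - 1) * (-2 * s))) s :=
    hd2.comp s hdphi
  have hH : HasDerivAt H
      (g1 s + 2 * (g2 (phi s) * ((1:ℝ)/4 * (1 - s ^ 2) ^ ((1:ℝ)/4 - 1) * (-2 * s)))) s :=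
    hd1.add (hcomp.const_mul 2)
  convert hH using 1
  have hg2val : g2 (phi s) = s⁻¹ := by
    rw [g2]
    show (1 - (phi s) ^ 4) ^ (-(1/2) : ℝ) = s⁻¹
    rw [hphi4, ← rpow_natCast s 2, ← rpow_mul hs0.le]
    norm_num [rpow_neg_one]
  rw [hg2val, g1]
  have h34 : ((1:ℝ)/4 - 1) = (-(3/4) : ℝ) := by norm_num
  rw [h34]
  field_simp
  ring

private lemma H_cont : ContinuousOn H (Icc (0:ℝ) 1) := by
  have h01 : (0:ℝ) ∈ uIcc (0:ℝ) 1 := left_mem_uIcc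
  have hu : uIcc (0:ℝ) 1 = Icc (0:ℝ) 1 := uIcc_of_le zero_le_one
  have c1 : ContinuousOn I1 (Icc (0:ℝ) 1) := by
    have := continuousOn_primitive_interval' int_g1 h01
    rwa [hu] at this
  have c2 : ContinuousOn I2 (Icc (0:ℝ) 1) := by
    have := continuousOn_primitive_interval' int_g2 h01
    rwa [hu] at this
  exact c1.add (continuousOn_const.mul
    (c2.comp phi_cont.continuousOn (fun s hs => phi_mem hs)))

private lemma H_const : ∀ s ∈ Icc (0:ℝ) 1, H s = H (1/2) := by
  have hIoo : ∀ s ∈ Ioo (0:ℝ) 1, H s = H (1/2) := by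
    intro s hs
    have half : (1:ℝ)/2 ∈ Ioo (0:ℝ) 1 := by norm_num
    rcases le_total s (1/2) with h | h
    · have := constant_of_has_deriv_right_zero (f := H) (a := s) (b := 1/2)
        (fun x hx => (H_deriv ⟨lt_of_lt_of_le hs.1 hx.1,
          lt_of_le_of_lt hx.2 half.2⟩).continuousAt.continuousWithinAt)
        (fun x hx => (H_deriv ⟨lt_of_lt_of_le hs.1 hx.1,
          lt_of_lt_of_le hx.2 half.2.le⟩).hasDerivWithinAt)
      exact (this (1/2) ⟨h, le_rfl⟩).symm
    · have := constant_of_has_deriv_right_zero (f := H) (a := 1/2) (b := s)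
        (fun x hx => (H_deriv ⟨lt_of_lt_of_le half.1 hx.1,
          lt_of_le_of_lt hx.2 hs.2⟩).continuousAt.continuousWithinAt)
        (fun x hx => (H_deriv ⟨lt_of_lt_of_le half.1 hx.1,
          lt_of_lt_of_le hx.2 hs.2.le⟩).hasDerivWithinAt)
      exact this s ⟨h, le_rfl⟩
  intro y hy
  have hne : (𝓝[Ioo (0:ℝ) 1] y).NeBot := by
    rw [← mem_closure_iff_nhdsWithin_neBot, closure_Ioo (by norm_num : (0:ℝ) ≠ 1)]
    exact hy
  have h1 : Tendsto H (𝓝[Ioo (0:ℝ) 1] y) (𝓝 (H y)) :=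
    (H_cont y hy).mono Ioo_subset_Icc_self
  have h2 : Tendsto H (𝓝[Ioo (0:ℝ) 1] y) (𝓝 (H (1/2))) := by
    refine tendsto_const_nhds.congr' ?_
    filter_upwards [self_mem_nhdsWithin] with z hz using (hIoo z hz).symm
  exact tendsto_nhds_unique h1 h2

private lemma key_identity : ∀ s ∈ Icc (0:ℝ) 1, I1 s + 2 * I2 (phi s) = 2 * I2 1 := by
  have h0 : H 0 = 2 * I2 1 := by
    have hphi0 : phi 0 = 1 := by simp [phi]
    have hI10 : I1 0 = 0 := integral_same
    simp [H, hphi0, hI10]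
  intro s hs
  have := (H_const s hs).trans (H_const (1/2) (by norm_num)).symm
  -- H s = H (1/2); also H 0 = H (1/2)
  have h00 := H_const 0 (by norm_num)
  calc I1 s + 2 * I2 (phi s) = H s := rfl
  _ = H 0 := by rw [H_const s hs, ← h00]
  _ = 2 * I2 1 := h0

/-- Equation (2.5) in the proof of Theorem 2: sin_{4/3,2}(2x) = cos_{2,4}(π_{2,4}/2 - x). -/
theorem sin432_eq_cos24
    (F₁ F₂ : ℝ → ℝ)
    (hF₁ : ∀ s, F₁ s = ∫ t in (0:ℝ)..s, (1 - t ^ 2) ^ (-(3/4) : ℝ))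
    (hF₂ : ∀ s, F₂ s = ∫ t in (0:ℝ)..s, (1 - t ^ 4) ^ (-(1/2) : ℝ))
    (pi24 : ℝ) (hpi : pi24 = 2 * F₂ 1)
    (x : ℝ) (hx : x ∈ Set.Icc 0 (pi24 / 2))
    (S σ : ℝ) (hS : S ∈ Set.Icc (0:ℝ) 1) (hσ : σ ∈ Set.Icc (0:ℝ) 1)
    (hFS : F₁ S = 2 * x) (hFσ : F₂ σ = pi24 / 2 - x) :
    S = (1 - σ ^ 4) ^ ((1:ℝ)/2) := by
  have hF1I : ∀ s, F₁ s = I1 s := fun s => hF₁ s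
  have hF2I : ∀ s, F₂ s = I2 s := fun s => hF₂ s
  have hkey := key_identity S hS
  rw [← hF1I, ← hF2I, ← hF2I, hFS] at hkey
  -- 2x + 2 F₂ (phi S) = 2 F₂ 1
  have heq : F₂ (phi S) = F₂ σ := by
    rw [hFσ, hpi]
    linarith
  have hinj : phi S = σ := by
    have := mono_I2.injOn
    refine this (phi_mem hS) hσ ?_
    rw [← hF2I, ← hF2I]
    exact heq
  have hσ4 : σ ^ 4 = 1 - S ^ 2 := by rw [← hinj]; exact phi_pow4 hS
  rw [hσ4]
  have : (1 : ℝ) - (1 - S ^ 2) = S ^ 2 := by ring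
  rw [this, ← rpow_natCast S 2, ← rpow_mul hS.1]
  norm_num
end

section
/- Let F₁(s) = ∫₀ˢ (1 − t²)^{−3/4} dt and F₂(s) = ∫₀ˢ (1 − t⁴)^{−1/2} dt for s ∈ [0,1], with π_{2,4} = 2F₂(1). For every x ∈ [0, π_{2,4}/2], if S, g ∈ [0,1] satisfy F₁(S) = 2x and F₂(g) = x, then S = 2g/(1 + g²). -/
open Set MeasureTheory Filter Topology intervalIntegral

private lemma aux_integrable {c : ℝ} (hc : -1 < c) (hc0 : c ≤ 0) {h : ℝ → ℝ}
    (hcont : Continuous h)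
    (hb : ∀ t ∈ Set.Ioo (0:ℝ) 1, 1 - t ≤ h t) :
    IntervalIntegrable (fun t => h t ^ c) volume 0 1 := by
  have hg : IntervalIntegrable (fun t : ℝ => (1 - t) ^ c) volume 0 1 := by
    have := ((intervalIntegral.intervalIntegrable_rpow' (a := 0) (b := 1) hc).comp_sub_left 1).symm
    simpa using this
  have hmeas : AEStronglyMeasurable (fun t => h t ^ c) (volume.restrict (Set.Ioc (0:ℝ) 1)) := by
    rw [← Measure.restrict_congr_set Ioo_ae_eq_Ioc]
    refine ContinuousOn.aestronglyMeasurable ?_ measurableSet_Ioo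
    intro t ht
    have hpos : (0:ℝ) < h t := lt_of_lt_of_le (by linarith [ht.2]) (hb t ht)
    exact (hcont.continuousAt.rpow_const (Or.inl hpos.ne')).continuousWithinAt
  refine hg.mono_fun ?_ ?_
  · rwa [Set.uIoc_of_le (by norm_num : (0:ℝ) ≤ 1)]
  rw [Set.uIoc_of_le (by norm_num : (0:ℝ) ≤ 1)]
  have hne : ∀ᵐ t : ℝ ∂(volume.restrict (Set.Ioc (0:ℝ) 1)), t ≠ 1 := by
    simp only [ae_iff, not_not]
    have h1 : {t : ℝ | t = 1} = {1} := rfl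
    rw [h1, Measure.restrict_apply (measurableSet_singleton 1)]
    exact measure_mono_null Set.inter_subset_left Real.volume_singleton
  filter_upwards [ae_restrict_mem measurableSet_Ioc, hne] with t ht hne1
  have ht1 : t < 1 := lt_of_le_of_ne ht.2 hne1
  have h0 : (0:ℝ) < 1 - t := by linarith
  have hle : 1 - t ≤ h t := hb t ⟨ht.1, ht1⟩
  rw [Real.norm_eq_abs, Real.norm_eq_abs,
    abs_of_nonneg (Real.rpow_nonneg (le_trans h0.le hle) c),
    abs_of_nonneg (Real.rpow_nonneg h0.le c)]
  exact Real.rpow_le_rpow_of_nonpos h0 hle hc0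

private lemma int1 : IntervalIntegrable (fun t : ℝ => (1 - t ^ 2) ^ (-(3/4) : ℝ)) volume 0 1 := by
  refine aux_integrable (by norm_num) (by norm_num) (by fun_prop) ?_
  intro t ht
  nlinarith [ht.1.le, ht.2.le]

private lemma int2 : IntervalIntegrable (fun t : ℝ => (1 - t ^ 4) ^ (-(1/2) : ℝ)) volume 0 1 := by
  refine aux_integrable (by norm_num) (by norm_num) (by fun_prop) ?_
  intro t ht
  nlinarith [ht.1.le, ht.2.le, sq_nonneg t, sq_nonneg (t^2), sq_nonneg (t - t^2)]

private lemma mono1 :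
    StrictMonoOn (fun s : ℝ => ∫ t in (0:ℝ)..s, (1 - t ^ 2) ^ (-(3/4) : ℝ)) (Set.Icc 0 1) := by
  intro a ha b hb hab
  have hsub : IntervalIntegrable (fun t : ℝ => (1 - t ^ 2) ^ (-(3/4) : ℝ)) volume a b :=
    int1.mono_set (by
      rw [Set.uIcc_of_le hab.le, Set.uIcc_of_le (by norm_num : (0:ℝ) ≤ 1)]
      exact Set.Icc_subset_Icc ha.1 hb.2)
  have hsub0 : IntervalIntegrable (fun t : ℝ => (1 - t ^ 2) ^ (-(3/4) : ℝ)) volume 0 a :=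
    int1.mono_set (by
      rw [Set.uIcc_of_le ha.1, Set.uIcc_of_le (by norm_num : (0:ℝ) ≤ 1)]
      exact Set.Icc_subset_Icc le_rfl ha.2)
  have hpos : 0 < ∫ t in a..b, (1 - t ^ 2) ^ (-(3/4) : ℝ) := by
    refine intervalIntegral.intervalIntegral_pos_of_pos_on hsub ?_ hab
    intro t ht
    have h1 : (0:ℝ) < 1 - t ^ 2 := by nlinarith [ha.1.trans ht.1.le, ht.2.trans_le hb.2]
    exact Real.rpow_pos_of_pos h1 _
  have hadd := intervalIntegral.integral_add_adjacent_intervals hsub0 hsub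
  dsimp only
  linarith [hadd]

private lemma hasDerivAt_phi (x : ℝ) :
    HasDerivAt (fun u : ℝ => 2 * u / (1 + u ^ 2)) (2 * (1 - x ^ 2) / (1 + x ^ 2) ^ 2) x := by
  have hc : (1 + x ^ 2 : ℝ) ≠ 0 := by positivity
  have h := ((hasDerivAt_id x).const_mul 2).div
    (((hasDerivAt_pow 2 x)).const_add 1) hc
  convert h using 1
  · rfl
  · rfl
  · funext u; simp
  simp only [id]; norm_num
  ring

private lemma phi_mem_s13 (u : ℝ) (h0 : 0 ≤ u) (h1 : u ≤ 1) :
    2 * u / (1 + u ^ 2) ∈ Set.Icc (0:ℝ) 1 := by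
  have hc : (0:ℝ) < 1 + u ^ 2 := by positivity
  constructor
  · positivity
  · rw [div_le_one hc]; nlinarith [sq_nonneg (1 - u)]

private lemma phi_lt_one (u : ℝ) (h1 : u < 1) : 2 * u / (1 + u ^ 2) < 1 := by
  have hc : (0:ℝ) < 1 + u ^ 2 := by positivity
  rw [div_lt_one hc]; nlinarith [sq_nonneg (1 - u)]

private lemma rpow_algebra {d c : ℝ} (hd : 0 < d) (hc : 0 < c) :
    2 * d / c ^ 2 * ((d ^ 2 / c ^ 2) ^ (-(3/4) : ℝ)) = 2 * ((d * c) ^ (-(1/2) : ℝ)) := by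
  have hL : (0:ℝ) < 2 * d / c ^ 2 * ((d ^ 2 / c ^ 2) ^ (-(3/4) : ℝ)) := by positivity
  have hR : (0:ℝ) < 2 * ((d * c) ^ (-(1/2) : ℝ)) := by positivity
  apply Real.log_injOn_pos (Set.mem_Ioi.mpr hL) (Set.mem_Ioi.mpr hR)
  rw [Real.log_mul (ne_of_gt (by positivity)) (ne_of_gt (by positivity)),
    Real.log_rpow (by positivity),
    Real.log_div (ne_of_gt (by positivity)) (ne_of_gt (by positivity)),
    Real.log_div (ne_of_gt (by positivity)) (ne_of_gt (by positivity)),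
    Real.log_mul (by norm_num) hd.ne', Real.log_pow, Real.log_pow,
    Real.log_mul (by norm_num) (ne_of_gt (by positivity)),
    Real.log_rpow (by positivity),
    Real.log_mul hd.ne' hc.ne']
  push_cast
  ring

private lemma key_subst (g : ℝ) (hg0 : 0 ≤ g) (hg1 : g < 1) :
    ∫ t in (0:ℝ)..(2 * g / (1 + g ^ 2)), (1 - t ^ 2) ^ (-(3/4) : ℝ)
      = 2 * ∫ t in (0:ℝ)..g, (1 - t ^ 4) ^ (-(1/2) : ℝ) := by
  set φ : ℝ → ℝ := fun u => 2 * u / (1 + u ^ 2) with hφ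
  set φ' : ℝ → ℝ := fun u => 2 * (1 - u ^ 2) / (1 + u ^ 2) ^ 2 with hφ'
  have hφc : Continuous φ := by
    rw [hφ]; fun_prop (disch := intros; positivity)
  have hφ'c : Continuous φ' := by
    rw [hφ']; fun_prop (disch := intros; positivity)
  have himg : φ '' Set.uIcc 0 g ⊆ Set.Ico 0 1 := by
    rintro _ ⟨u, hu, rfl⟩
    rw [Set.uIcc_of_le hg0] at hu
    exact ⟨(phi_mem_s13 u hu.1 (hu.2.trans hg1.le)).1, phi_lt_one u (hu.2.trans_lt hg1)⟩
  have hcont : ContinuousOn (fun t : ℝ => (1 - t ^ 2) ^ (-(3/4) : ℝ)) (Set.Ico 0 1) := by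
    intro x hx
    have h1 : (1 - x ^ 2 : ℝ) ≠ 0 := by nlinarith [hx.1, hx.2]
    exact (((by fun_prop : Continuous fun t : ℝ => 1 - t ^ 2).continuousAt).rpow_const
      (Or.inl h1)).continuousWithinAt
  have hsub := intervalIntegral.integral_comp_smul_deriv''
    (f := φ) (f' := φ') (g := fun t : ℝ => (1 - t ^ 2) ^ (-(3/4) : ℝ)) (a := 0) (b := g)
    hφc.continuousOn
    (fun x _ => (hasDerivAt_phi x).hasDerivWithinAt)
    hφ'c.continuousOn
    (hcont.mono himg)
  have hphi0 : φ 0 = 0 := by simp [hφ]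
  rw [hphi0] at hsub
  rw [← hsub, ← intervalIntegral.integral_const_mul]
  refine intervalIntegral.integral_congr ?_
  intro x hx
  rw [Set.uIcc_of_le hg0] at hx
  have hx1 : x < 1 := hx.2.trans_lt hg1
  have hd : (0:ℝ) < 1 - x ^ 2 := by nlinarith [hx.1]
  have hcx : (0:ℝ) < 1 + x ^ 2 := by positivity
  have h1 : 1 - (φ x) ^ 2 = (1 - x ^ 2) ^ 2 / (1 + x ^ 2) ^ 2 := by
    rw [hφ]; field_simp; ring
  have h2 : (1 - x ^ 4 : ℝ) = (1 - x ^ 2) * (1 + x ^ 2) := by ring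
  simp only [smul_eq_mul, Function.comp_apply, hφ', h1, h2]
  exact rpow_algebra hd hcx

private lemma key_id (g : ℝ) (hg : g ∈ Set.Icc (0:ℝ) 1) :
    ∫ t in (0:ℝ)..(2 * g / (1 + g ^ 2)), (1 - t ^ 2) ^ (-(3/4) : ℝ)
      = 2 * ∫ t in (0:ℝ)..g, (1 - t ^ 4) ^ (-(1/2) : ℝ) := by
  rcases lt_or_eq_of_le hg.2 with h | h
  · exact key_subst g hg.1 h
  · subst h
    set G₁ : ℝ → ℝ := fun s => ∫ t in (0:ℝ)..s, (1 - t ^ 2) ^ (-(3/4) : ℝ) with hG₁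
    set G₂ : ℝ → ℝ := fun s => ∫ t in (0:ℝ)..s, (1 - t ^ 4) ^ (-(1/2) : ℝ) with hG₂
    have hC₁ : ContinuousOn G₁ (Set.Icc 0 1) := by
      have := intervalIntegral.continuousOn_primitive_interval'
        (f := fun t : ℝ => (1 - t ^ 2) ^ (-(3/4) : ℝ)) (μ := volume) (b₁ := 0) (b₂ := 1)
        (a := 0) int1 Set.left_mem_uIcc
      rwa [Set.uIcc_of_le (by norm_num : (0:ℝ) ≤ 1)] at this
    have hC₂ : ContinuousOn G₂ (Set.Icc 0 1) := by
      have := intervalIntegral.continuousOn_primitive_interval'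
        (f := fun t : ℝ => (1 - t ^ 4) ^ (-(1/2) : ℝ)) (μ := volume) (b₁ := 0) (b₂ := 1)
        (a := 0) int2 Set.left_mem_uIcc
      rwa [Set.uIcc_of_le (by norm_num : (0:ℝ) ≤ 1)] at this
    set φ : ℝ → ℝ := fun u => 2 * u / (1 + u ^ 2) with hφ
    have hφ1 : φ 1 = 1 := by rw [hφ]; norm_num
    haveI : (𝓝[Set.Ioo (0:ℝ) 1] 1).NeBot := right_nhdsWithin_Ioo_neBot one_pos
    have hφcont : Continuous φ := by
      rw [hφ]; fun_prop (disch := intros; positivity)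
    have t1 : Tendsto (fun a => G₁ (φ a)) (𝓝[Set.Ioo (0:ℝ) 1] 1) (𝓝 (G₁ (φ 1))) := by
      have hφt : Tendsto φ (𝓝[Set.Ioo (0:ℝ) 1] 1) (𝓝[Set.Icc 0 1] 1) := by
        rw [tendsto_nhdsWithin_iff]
        constructor
        · have := hφcont.tendsto 1
          rw [hφ1] at this
          exact this.mono_left nhdsWithin_le_nhds
        · filter_upwards [self_mem_nhdsWithin] with a ha
          exact phi_mem_s13 a ha.1.le ha.2.le
      rw [hφ1]
      exact ((hC₁ 1 (by norm_num)).tendsto).comp hφt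
    have t2 : Tendsto (fun a => 2 * G₂ a) (𝓝[Set.Ioo (0:ℝ) 1] 1) (𝓝 (2 * G₂ 1)) := by
      have hidt : Tendsto (fun a : ℝ => a) (𝓝[Set.Ioo (0:ℝ) 1] 1) (𝓝[Set.Icc 0 1] 1) := by
        rw [tendsto_nhdsWithin_iff]
        exact ⟨tendsto_id.mono_left nhdsWithin_le_nhds,
          by filter_upwards [self_mem_nhdsWithin] with a ha using ⟨ha.1.le, ha.2.le⟩⟩
      exact (((hC₂ 1 (by norm_num)).tendsto).comp hidt).const_mul 2
    have heq : (fun a => G₁ (φ a)) =ᶠ[𝓝[Set.Ioo (0:ℝ) 1] 1] fun a => 2 * G₂ a := by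
      filter_upwards [self_mem_nhdsWithin] with a ha
      exact key_subst a ha.1.le ha.2
    have huniq := tendsto_nhds_unique (t1.congr' heq) t2
    rw [hφ1] at huniq
    show G₁ (2 * 1 / (1 + 1 ^ 2)) = 2 * G₂ 1
    rw [show (2 * 1 / (1 + 1 ^ 2) : ℝ) = 1 by norm_num]
    exact huniq

/-- Key intermediate identity in the proof of Theorem 2:
sin_{4/3,2}(2x) = 2 sin_{2,4} x / (1 + sin_{2,4}² x). -/
theorem sin432_double_in_terms_of_lemniscate
    (F₁ F₂ : ℝ → ℝ)
    (hF₁ : ∀ s, F₁ s = ∫ t in (0:ℝ)..s, (1 - t ^ 2) ^ (-(3/4) : ℝ))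
    (hF₂ : ∀ s, F₂ s = ∫ t in (0:ℝ)..s, (1 - t ^ 4) ^ (-(1/2) : ℝ))
    (pi24 : ℝ) (hpi : pi24 = 2 * F₂ 1)
    (x : ℝ) (hx : x ∈ Set.Icc 0 (pi24 / 2))
    (S g : ℝ) (hS : S ∈ Set.Icc (0:ℝ) 1) (hg : g ∈ Set.Icc (0:ℝ) 1)
    (hFS : F₁ S = 2 * x) (hFg : F₂ g = x) :
    S = 2 * g / (1 + g ^ 2) := by
  have hφg : 2 * g / (1 + g ^ 2) ∈ Set.Icc (0:ℝ) 1 := phi_mem_s13 g hg.1 hg.2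
  have hkey : F₁ (2 * g / (1 + g ^ 2)) = 2 * F₂ g := by
    rw [hF₁, hF₂]
    exact key_id g hg
  have hval : F₁ S = F₁ (2 * g / (1 + g ^ 2)) := by
    rw [hkey, hFS, hFg]
  have hinj : Set.InjOn F₁ (Set.Icc 0 1) :=
    Set.InjOn.congr (mono1.injOn) (fun s hs => (hF₁ s).symm)
  exact hinj hS hφg hval
end

section
/- Let F(s) = ∫₀ˢ (1 − t³)^{−2/3} dt for s ∈ [0,1] and π_{3/2,3} = 2F(1). For every x ∈ [0, π_{3/2,3}/4], if s, S ∈ [0,1] satisfy F(s) = x and F(S) = 2x, and c = (1 − s³)^{2/3}, then S = s·(1 + c^{3/2}) / (c^{1/2}·(1 + s³)). -/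
open MeasureTheory intervalIntegral Set

noncomputable def dixf : ℝ → ℝ := fun t => (1 - t ^ 3) ^ (-(2/3) : ℝ)

lemma dixf_meas : Measurable dixf := by unfold dixf; fun_prop

lemma dixf_int : IntervalIntegrable dixf volume 0 1 := by
  have h1 : IntervalIntegrable (fun t : ℝ => (1 - t) ^ (-(2/3) : ℝ)) volume 0 1 := by
    have := (intervalIntegral.intervalIntegrable_rpow' (a := 0) (b := 1)
      (r := (-(2/3) : ℝ)) (by norm_num)).comp_sub_left 1
    simpa using this.symm
  rw [intervalIntegrable_iff_integrableOn_Ioc_of_le (by norm_num)] at h1 ⊢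
  refine h1.mono' dixf_meas.aestronglyMeasurable ?_
  filter_upwards [ae_restrict_mem measurableSet_Ioc] with t ht
  rcases ht with ⟨ht0, ht1⟩
  have ht3 : t ^ 3 ≤ 1 := pow_le_one₀ ht0.le ht1
  have hw0 : (0:ℝ) ≤ 1 - t ^ 3 := by linarith
  simp only [dixf]
  rw [Real.norm_eq_abs, abs_of_nonneg (Real.rpow_nonneg hw0 _)]
  rcases eq_or_lt_of_le ht3 with h | h
  · rw [show (1:ℝ) - t ^ 3 = 0 by linarith, Real.zero_rpow (by norm_num)]
    exact Real.rpow_nonneg (by linarith) _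
  · have htlt : t < 1 := by
      by_contra hcon
      push_neg at hcon
      exact absurd h (not_lt.2 (one_le_pow₀ hcon))
    have htt : t ^ 3 ≤ t :=  by
      nlinarith [mul_nonneg (mul_nonneg ht0.le (by linarith : (0:ℝ) ≤ 1 - t))
        (by linarith : (0:ℝ) ≤ 1 + t)]
    exact Real.rpow_le_rpow_of_nonpos (by linarith) (by linarith) (by norm_num)

noncomputable def dixF : ℝ → ℝ := fun s => ∫ t in (0:ℝ)..s, dixf t

lemma dixf_int' {a b : ℝ} (ha : a ∈ Icc (0:ℝ) 1) (hb : b ∈ Icc (0:ℝ) 1) :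
    IntervalIntegrable dixf volume a b := by
  apply dixf_int.mono_set
  apply uIcc_subset_uIcc <;> rw [uIcc_of_le (zero_le_one)] <;> assumption

lemma dixF_cont : ContinuousOn dixF (Icc 0 1) := by
  have := intervalIntegral.continuousOn_primitive_interval' (μ := volume) (a := (0:ℝ))
    (b₁ := (0:ℝ)) (b₂ := 1) dixf_int left_mem_uIcc
  unfold dixF
  simpa [dixF, uIcc_of_le (zero_le_one (α := ℝ))] using this

lemma dixf_pos {t : ℝ} (h0 : 0 ≤ t) (h1 : t < 1) : 0 < dixf t := by
  have : t ^ 3 < 1 := pow_lt_one₀ h0 h1 (by norm_num)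
  exact Real.rpow_pos_of_pos (by linarith) _

lemma dixF_mono : StrictMonoOn dixF (Icc 0 1) := by
  intro a ha b hb hab
  have h1 : dixF a + ∫ t in a..b, dixf t = dixF b :=
    intervalIntegral.integral_add_adjacent_intervals (dixf_int' (by simp) ha) (dixf_int' ha hb)
  have h2 : 0 < ∫ t in a..b, dixf t := by
    apply intervalIntegral.intervalIntegral_pos_of_pos_on (dixf_int' ha hb)
    · intro x hx
      exact dixf_pos (le_trans ha.1 hx.1.le) (lt_of_lt_of_le hx.2 hb.2)
    · exact hab
  linarith

lemma dixF_deriv {b : ℝ} (hb0 : 0 ≤ b) (hb1 : b < 1) : HasDerivAt dixF (dixf b) b := by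
  apply intervalIntegral.integral_hasDerivAt_right (dixf_int' (by simp) ⟨hb0, hb1.le⟩)
    (dixf_meas.stronglyMeasurable.stronglyMeasurableAtFilter)
  have h : (1:ℝ) - b ^ 3 ≠ 0 := by
    have : b ^ 3 < 1 := pow_lt_one₀ hb0 hb1 (by norm_num)
    linarith
  exact ((continuousAt_const.sub ((continuous_pow 3).continuousAt)).rpow_const (Or.inl h))
noncomputable def dixg : ℝ → ℝ := fun t => t * (2 - t^3) * (1 - t^3) ^ (-(1/3):ℝ) / (1 + t^3)

lemma rpow_P1 {w : ℝ} (hw : 0 < w) : w ^ (-(1/3):ℝ) = (w ^ ((1:ℝ)/3))⁻¹ := by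
  rw [← Real.rpow_neg hw.le]
lemma rpow_P4 {w : ℝ} (hw : 0 < w) : w ^ ((-(1/3)) - 1 : ℝ) = ((w ^ ((1:ℝ)/3))^4)⁻¹ := by
  rw [← Real.rpow_natCast (w ^ ((1:ℝ)/3)) 4, ← Real.rpow_mul hw.le, ← Real.rpow_neg hw.le]
  norm_num
lemma rpow_P2 {w : ℝ} (hw : 0 ≤ w) : w ^ (-(2/3):ℝ) = ((w ^ ((1:ℝ)/3))^2)⁻¹ := by
  rw [← Real.rpow_natCast (w ^ ((1:ℝ)/3)) 2, ← Real.rpow_mul hw, ← Real.rpow_neg hw]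
  norm_num
lemma rpow_P3 {w : ℝ} (hw : 0 ≤ w) : (w ^ ((1:ℝ)/3))^3 = w := by
  rw [← Real.rpow_natCast (w ^ ((1:ℝ)/3)) 3, ← Real.rpow_mul hw]
  norm_num

lemma dixg_deriv {s : ℝ} (h1 : s^3 < 1) (h2 : 0 ≤ s) :
    HasDerivAt dixg
      (2*(1-2*s^3)^2 / ((((1-s^3) ^ ((1:ℝ)/3)))^4 * (1+s^3)^2)) s := by
  have hw : 0 < 1 - s^3 := by linarith
  have hd : (1:ℝ) + s^3 ≠ 0 := by positivity
  set P := (1-s^3) ^ ((1:ℝ)/3) with hPdef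
  have hP : 0 < P := Real.rpow_pos_of_pos hw _
  have hP3 : P^3 = 1 - s^3 := rpow_P3 hw.le
  have e1 : P⁻¹ = (1-s^3) * (P^4)⁻¹ := by
    rw [← hP3]; field_simp
  have hA : HasDerivAt (fun t : ℝ => 1 - t^3) (-(3*s^2)) s := by
    simpa using ((hasDerivAt_pow 3 s).const_sub 1)
  have hB := hA.rpow_const (p := (-(1/3):ℝ)) (Or.inl hw.ne')
  have hC : HasDerivAt (fun t : ℝ => t * (2 - t^3)) (1 * (2 - s ^ 3) + s * -(3 * s ^ 2)) s := by
    simpa [Pi.mul_def] using (hasDerivAt_id' s).mul ((hasDerivAt_pow 3 s).const_sub 2)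
  have hN := hC.mul hB
  have hD2 : HasDerivAt (fun t : ℝ => 1 + t^3) (3*s^2) s := by
    simpa using ((hasDerivAt_pow 3 s).const_add 1)
  have hQ := hN.div hD2 hd
  convert hQ using 1
  · rfl
  · rfl
  · rfl
  simp only [Pi.mul_apply]
  rw [rpow_P1 hw, rpow_P4 hw, ← hPdef, e1]
  field_simp
  ring

lemma rpow_Q {q : ℝ} (hq : 0 ≤ q) : ((q^3 : ℝ)) ^ (-(2/3):ℝ) = (q^2)⁻¹ := by
  rw [← Real.rpow_natCast q 3, ← Real.rpow_mul hq, show ((3:ℕ):ℝ) * (-(2/3)) = -(2:ℕ) by norm_num,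
    Real.rpow_neg hq, Real.rpow_natCast]

lemma dixg_eq {s : ℝ} (h1 : s^3 < 1) (h2 : 0 ≤ s) :
    dixg s = s * (2 - s^3) / ((1-s^3) ^ ((1:ℝ)/3) * (1 + s^3)) := by
  have hw : 0 < 1 - s^3 := by linarith
  have hP : 0 < (1-s^3) ^ ((1:ℝ)/3) := Real.rpow_pos_of_pos hw _
  have hd : (0:ℝ) < 1 + s^3 := by positivity
  unfold dixg
  rw [rpow_P1 hw]
  field_simp

lemma dixg_cube {s : ℝ} (h1 : s^3 < 1) (h2 : 0 ≤ s) :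
    1 - (dixg s)^3 = (1-2*s^3)^3 / ((1-s^3) * (1+s^3)^3) := by
  have hw : 0 < 1 - s^3 := by linarith
  have hd : (0:ℝ) < 1 + s^3 := by positivity
  set P := (1-s^3) ^ ((1:ℝ)/3) with hPdef
  have hP : 0 < P := Real.rpow_pos_of_pos hw _
  have hP3 : P^3 = 1 - s^3 := rpow_P3 hw.le
  rw [dixg_eq h1 h2, ← hPdef, div_pow, mul_pow, mul_pow, hP3]
  field_simp
  ring


lemma dixg_nonneg {s : ℝ} (h2 : 0 ≤ s) (h1 : s^3 ≤ 1) : 0 ≤ dixg s := by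
  unfold dixg
  have hw : (0:ℝ) ≤ 1 - s^3 := by linarith
  apply div_nonneg
  · exact mul_nonneg (mul_nonneg h2 (by linarith)) (Real.rpow_nonneg hw _)
  · positivity

lemma dixg_le_one {s : ℝ} (h2 : 0 ≤ s) (h1 : s^3 ≤ 1/2) : dixg s ≤ 1 := by
  have hcube : 1 - (dixg s)^3 = (1-2*s^3)^3 / ((1-s^3) * (1+s^3)^3) := dixg_cube (by linarith) h2
  have h3 : (dixg s)^3 ≤ 1 := by
    have : 0 ≤ (1-2*s^3)^3 / ((1-s^3) * (1+s^3)^3) :=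
      div_nonneg (pow_nonneg (by linarith) 3)
        (le_of_lt (mul_pos (by linarith) (by positivity)))
    linarith
  exact (pow_le_one_iff_of_nonneg (dixg_nonneg h2 (by linarith)) (by norm_num)).mp h3

lemma dixg_lt_one {s : ℝ} (h2 : 0 ≤ s) (h1 : s^3 < 1/2) : dixg s < 1 := by
  have hcube : 1 - (dixg s)^3 = (1-2*s^3)^3 / ((1-s^3) * (1+s^3)^3) := dixg_cube (by linarith) h2
  have h3 : (dixg s)^3 < 1 := by
    have : 0 < (1-2*s^3)^3 / ((1-s^3) * (1+s^3)^3) :=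
      div_pos (pow_pos (by linarith) 3) (mul_pos (by linarith) (by positivity))
    linarith
  exact (pow_lt_one_iff_of_nonneg (dixg_nonneg h2 (by linarith)) (by norm_num)).mp h3

lemma dix_chain {y : ℝ} (h0 : 0 ≤ y) (h : y^3 < 1/2) :
    HasDerivAt (fun t => dixF (dixg t)) (2 * dixf y) y := by
  have hw : 0 < 1 - y^3 := by linarith
  have hd : (0:ℝ) < 1 + y^3 := by positivity
  have h2v : (0:ℝ) < 1 - 2*y^3 := by linarith
  set P := (1-y^3) ^ ((1:ℝ)/3) with hPdef
  have hP : 0 < P := Real.rpow_pos_of_pos hw _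
  have hP3 : P^3 = 1 - y^3 := rpow_P3 hw.le
  have hgd := dixg_deriv (by linarith) h0
  have hFd := dixF_deriv (dixg_nonneg h0 (by linarith)) (dixg_lt_one h0 h)
  have hcomp := hFd.comp y hgd
  convert hcomp using 1
  · rfl
  · rfl
  · rfl
  set q : ℝ := (1 - 2*y^3) / (P * (1 + y^3)) with hqdef
  have hq : 0 < q := by positivity
  have hq3 : 1 - (dixg y)^3 = q^3 := by
    rw [dixg_cube (by linarith) h0, hqdef, div_pow, mul_pow, hP3]
  have hfg : dixf (dixg y) = (q^2)⁻¹ := by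
    show (1 - (dixg y)^3) ^ (-(2/3):ℝ) = (q^2)⁻¹
    rw [hq3, rpow_Q hq.le]
  have hfy : dixf y = (P^2)⁻¹ := by
    show (1 - y^3) ^ (-(2/3):ℝ) = (P^2)⁻¹
    rw [rpow_P2 hw.le, ← hPdef]
  rw [hfy, hfg, hqdef, ← hPdef]
  field_simp

lemma s0_cube : ((1/2:ℝ)^((1:ℝ)/3))^3 = 1/2 := rpow_P3 (by norm_num)
lemma s0_pos : 0 < ((1/2:ℝ)^((1:ℝ)/3)) := Real.rpow_pos_of_pos (by norm_num) _
lemma s0_lt_one : ((1/2:ℝ)^((1:ℝ)/3)) < 1 :=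
  Real.rpow_lt_one (by norm_num) (by norm_num) (by norm_num)

lemma cube_le_half {t : ℝ} (h0 : 0 ≤ t) (h : t ≤ ((1/2:ℝ)^((1:ℝ)/3))) : t^3 ≤ 1/2 := by
  calc t^3 ≤ ((1/2:ℝ)^((1:ℝ)/3))^3 := pow_le_pow_left₀ h0 h 3
  _ = 1/2 := s0_cube

lemma cube_lt_half {t : ℝ} (h0 : 0 ≤ t) (h : t < ((1/2:ℝ)^((1:ℝ)/3))) : t^3 < 1/2 := by
  calc t^3 < ((1/2:ℝ)^((1:ℝ)/3))^3 := by
        apply pow_lt_pow_left₀ h h0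
        norm_num
  _ = 1/2 := s0_cube

lemma dixg_contOn : ContinuousOn dixg (Icc 0 ((1/2:ℝ)^((1:ℝ)/3))) := by
  unfold dixg
  apply ContinuousOn.div
  · apply ContinuousOn.mul (by fun_prop)
    apply ContinuousOn.rpow_const (by fun_prop)
    intro t ht
    left
    have h3 : t^3 ≤ 1/2 := cube_le_half ht.1 ht.2
    intro hcon
    rw [sub_eq_zero] at hcon
    exact absurd hcon.symm (by linarith)
  · fun_prop
  · intro t ht
    have : (0:ℝ) ≤ t^3 := pow_nonneg ht.1 3
    intro hcon
    nlinarith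

lemma dix_key : ∀ y ∈ Icc (0:ℝ) ((1/2:ℝ)^((1:ℝ)/3)), dixF (dixg y) = 2 * dixF y := by
  apply eq_of_has_deriv_right_eq (f' := fun y => 2 * dixf y)
  · intro y hy
    exact (dix_chain hy.1 (cube_lt_half hy.1 hy.2)).hasDerivWithinAt
  · intro y hy
    have hy1 : y < 1 := lt_trans hy.2 s0_lt_one
    exact ((dixF_deriv hy.1 hy1).const_mul 2).hasDerivWithinAt
  · apply dixF_cont.comp dixg_contOn
    intro t ht
    have h3 : t^3 ≤ 1/2 := cube_le_half ht.1 ht.2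
    exact ⟨dixg_nonneg ht.1 (by linarith), dixg_le_one ht.1 h3⟩
  · exact continuousOn_const.mul (dixF_cont.mono (Icc_subset_Icc le_rfl s0_lt_one.le))
  · have hg0 : dixg 0 = 0 := by simp [dixg]
    have hF00 : dixF 0 = 0 := by simp [dixF]
    rw [hg0, hF00, mul_zero]

/-- Dixon's double-angle formula (1.1):
sin_{3/2,3}(2x) = sin_{3/2,3} x (1 + cos_{3/2,3}^{3/2} x)/(cos_{3/2,3}^{1/2} x (1 + sin_{3/2,3}³ x)). -/
theorem dixon_double_angle
    (F : ℝ → ℝ) (hF : ∀ s, F s = ∫ t in (0:ℝ)..s, (1 - t ^ 3) ^ (-(2/3) : ℝ))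
    (pi323 : ℝ) (hpi : pi323 = 2 * F 1)
    (x : ℝ) (hx : x ∈ Set.Icc 0 (pi323 / 4))
    (s S : ℝ) (hs : s ∈ Set.Icc (0:ℝ) 1) (hS : S ∈ Set.Icc (0:ℝ) 1)
    (hFs : F s = x) (hFS : F S = 2 * x)
    (c : ℝ) (hc : c = (1 - s ^ 3) ^ ((2:ℝ)/3)) :
    S = s * (1 + c ^ ((3:ℝ)/2)) / (c ^ ((1:ℝ)/2) * (1 + s ^ 3)) := by
  have hFd : F = dixF := funext fun t => hF t
  subst hFd
  set s0 : ℝ := ((1/2:ℝ)^((1:ℝ)/3)) with hs0def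
  have hs0mem : s0 ∈ Icc (0:ℝ) 1 := ⟨s0_pos.le, s0_lt_one.le⟩
  -- dixg s0 = 1
  have hs0p : (0:ℝ) < s0 := s0_pos
  have h3 : s0^3 = 1/2 := s0_cube
  have hgs0 : dixg s0 = 1 := by
    rw [dixg_eq (by rw [h3]; norm_num) hs0p.le]
    have h1 : (1:ℝ) - s0^3 = 1/2 := by rw [h3]; norm_num
    rw [h1, ← hs0def, h3]
    rw [div_eq_one_iff_eq (mul_ne_zero hs0p.ne' (by norm_num))]
    ring
  -- dixF s0 = dixF 1 / 2
  have hhalf : 2 * dixF s0 = dixF 1 := by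
    have := dix_key s0 ⟨s0_pos.le, le_refl s0⟩
    rw [hgs0] at this
    linarith
  -- x ≤ dixF s0
  have hxle : x ≤ dixF s0 := by
    have := hx.2
    rw [hpi] at this
    linarith
  -- s ≤ s0
  have hsle : s ≤ s0 := by
    have h := (dixF_mono.le_iff_le hs hs0mem).mp (by rw [hFs]; exact hxle)
    exact h
  have hs3 : s^3 ≤ 1/2 := cube_le_half hs.1 hsle
  have hgsm : dixg s ∈ Icc (0:ℝ) 1 :=
    ⟨dixg_nonneg hs.1 (by linarith), dixg_le_one hs.1 hs3⟩
  -- S = dixg s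
  have hSg : S = dixg s := by
    apply dixF_mono.injOn hS hgsm
    rw [hFS, dix_key s ⟨hs.1, hsle⟩, hFs]
  -- final algebra
  have hw : (0:ℝ) < 1 - s^3 := by linarith
  have hc32 : c ^ ((3:ℝ)/2) = 1 - s^3 := by
    rw [hc, ← Real.rpow_mul hw.le, show ((2:ℝ)/3)*(3/2) = 1 by norm_num, Real.rpow_one]
  have hc12 : c ^ ((1:ℝ)/2) = (1-s^3) ^ ((1:ℝ)/3) := by
    rw [hc, ← Real.rpow_mul hw.le, show ((2:ℝ)/3)*(1/2) = (1:ℝ)/3 by norm_num]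
  rw [hSg, dixg_eq (by linarith) hs.1, hc32, hc12]
  ring_nf
end

section
/- Let F(s) = ∫₀ˢ (1 − t⁴)^{−1/2} dt for s ∈ [0,1] and π_{2,4} = 2F(1). For every x ∈ [0, π_{2,4}/4], if s, S ∈ [0,1] satisfy F(s) = x and F(S) = 2x, and c = (1 − s⁴)^{1/2}, then S = 2·s·c/(1 + s⁴). -/
open Real MeasureTheory intervalIntegral Set

noncomputable def lemI (t : ℝ) : ℝ := (1 - t ^ 4) ^ (-(1/2) : ℝ)

noncomputable def lemF (s : ℝ) : ℝ := ∫ t in (0:ℝ)..s, lemI t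

noncomputable def lemg (u : ℝ) : ℝ := 2 * u * Real.sqrt (1 - u ^ 4) / (1 + u ^ 4)

lemma lemI_meas : Measurable lemI := by
  unfold lemI; fun_prop

lemma lemI_eq (t : ℝ) (h : 0 ≤ 1 - t ^ 4) : lemI t = (Real.sqrt (1 - t ^ 4))⁻¹ := by
  rw [lemI, Real.sqrt_eq_rpow, ← Real.rpow_neg h]

lemma lemI_nonneg (t : ℝ) (h : 0 ≤ 1 - t ^ 4) : 0 ≤ lemI t := Real.rpow_nonneg h _

lemma lemI_pos (t : ℝ) (h : 0 < 1 - t ^ 4) : 0 < lemI t := Real.rpow_pos_of_pos h _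

lemma lemI_int : IntervalIntegrable lemI volume 0 1 := by
  have h1 : IntervalIntegrable (fun t : ℝ => (1 - t) ^ (-(1/2) : ℝ)) volume 0 1 := by
    have := (intervalIntegral.intervalIntegrable_rpow'
      (a := 0) (b := 1) (r := -(1/2)) (by norm_num)).comp_sub_left 1
    simpa using this.symm
  refine h1.mono_fun lemI_meas.aestronglyMeasurable ?_
  filter_upwards [ae_restrict_mem measurableSet_uIoc] with t ht
  rw [uIoc_of_le (by norm_num : (0:ℝ) ≤ 1)] at ht
  obtain ⟨ht0, ht1⟩ := ht
  have h3 : t ^ 3 ≤ 1 := pow_le_one₀ ht0.le ht1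
  have h4 : t ^ 4 ≤ t := by nlinarith
  have h40 : 0 ≤ 1 - t ^ 4 := by nlinarith
  have hb : 0 ≤ 1 - t := by linarith
  rw [Real.norm_of_nonneg (lemI_nonneg t h40), Real.norm_of_nonneg (Real.rpow_nonneg hb _)]
  rcases eq_or_lt_of_le ht1 with h | h
  · subst h
    simp only [lemI]
    norm_num
  · exact Real.rpow_le_rpow_of_nonpos (by linarith) (by nlinarith) (by norm_num)

lemma lemI_int_sub {a b : ℝ} (ha : 0 ≤ a) (hb : b ≤ 1) (hab : a ≤ b) :
    IntervalIntegrable lemI volume a b := by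
  refine lemI_int.mono_set ?_
  rw [uIcc_of_le hab, uIcc_of_le (by norm_num : (0:ℝ) ≤ 1)]
  exact Icc_subset_Icc ha hb

lemma lemF_lt {a b : ℝ} (ha : 0 ≤ a) (hab : a < b) (hb : b ≤ 1) : lemF a < lemF b := by
  have hia : IntervalIntegrable lemI volume 0 a := lemI_int_sub le_rfl (by linarith) ha
  have hiab : IntervalIntegrable lemI volume a b := lemI_int_sub ha hb hab.le
  have hadd : lemF a + (∫ t in a..b, lemI t) = lemF b :=
    integral_add_adjacent_intervals hia hiab
  have hpos : 0 < ∫ t in a..b, lemI t := by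
    refine intervalIntegral_pos_of_pos_on hiab (fun x hx => lemI_pos x ?_) hab
    have h0x : 0 ≤ x := le_trans ha hx.1.le
    have h1x : x < 1 := lt_of_lt_of_le hx.2 hb
    have := pow_lt_one₀ h0x h1x (n := 4) (by norm_num)
    linarith
  linarith

lemma lemF_hasDeriv {u : ℝ} (h0 : 0 ≤ u) (h1 : u < 1) : HasDerivAt lemF (lemI u) u := by
  have hu4 : 0 < 1 - u ^ 4 := by
    have := pow_lt_one₀ h0 h1 (n := 4) (by norm_num)
    linarith
  refine integral_hasDerivAt_right (lemI_int_sub le_rfl h1.le h0)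
    lemI_meas.stronglyMeasurable.stronglyMeasurableAtFilter ?_
  exact ((continuous_const.sub (continuous_pow 4)).continuousAt).rpow_const (Or.inl hu4.ne')

lemma lemg_hasDeriv {u : ℝ} (h : 0 < 1 - u ^ 4) :
    HasDerivAt lemg (2 * (u ^ 8 - 6 * u ^ 4 + 1) /
      (Real.sqrt (1 - u ^ 4) * (1 + u ^ 4) ^ 2)) u := by
  set c := Real.sqrt (1 - u ^ 4) with hcdef
  have hc0 : 0 < c := Real.sqrt_pos.mpr h
  have hc2 : c ^ 2 = 1 - u ^ 4 := Real.sq_sqrt h.le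
  have hinner : HasDerivAt (fun v : ℝ => 1 - v ^ 4) (-(4 * u ^ 3)) u := by
    simpa using (hasDerivAt_pow 4 u).const_sub 1
  have hsq : HasDerivAt (fun v : ℝ => Real.sqrt (1 - v ^ 4))
      (1 / (2 * c) * -(4 * u ^ 3)) u :=
    (Real.hasDerivAt_sqrt h.ne').comp u hinner
  have h2u : HasDerivAt (fun v : ℝ => 2 * v) 2 u := by
    simpa using (hasDerivAt_id u).const_mul 2
  have hnum : HasDerivAt (fun v : ℝ => 2 * v * Real.sqrt (1 - v ^ 4))
      (2 * c + 2 * u * (1 / (2 * c) * -(4 * u ^ 3))) u := by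
    exact h2u.mul hsq
  have hden : HasDerivAt (fun v : ℝ => 1 + v ^ 4) (4 * u ^ 3) u := by
    simpa using (hasDerivAt_pow 4 u).const_add 1
  have hden0 : (1 + u ^ 4) ≠ 0 := by positivity
  have hval : 2 * c + 2 * u * (1 / (2 * c) * -(4 * u ^ 3)) = (2 - 6 * u ^ 4) / c := by
    field_simp
    linear_combination 2 * hc2
  have hdiv := hnum.div hden hden0
  rw [hval] at hdiv
  refine hdiv.congr_deriv (Eq.symm ?_)
  rw [div_eq_div_iff (by positivity) (by positivity)]
  field_simp
  linear_combination (8 * u ^ 4) * hc2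

lemma lemg_nonneg {u : ℝ} (h0 : 0 ≤ u) : 0 ≤ lemg u := by
  have : 0 ≤ 1 + u ^ 4 := by positivity
  exact div_nonneg (by positivity) this

lemma one_sub_g_sq {u : ℝ} (h : 0 ≤ 1 - u ^ 4) :
    1 - lemg u ^ 2 = (1 - 2 * u ^ 2 - u ^ 4) ^ 2 / (1 + u ^ 4) ^ 2 := by
  have hc2 : Real.sqrt (1 - u ^ 4) ^ 2 = 1 - u ^ 4 := Real.sq_sqrt h
  have hden0 : (1 + u ^ 4) ≠ 0 := by positivity
  rw [lemg]
  field_simp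
  nlinarith [hc2]

lemma one_add_g_sq {u : ℝ} (h : 0 ≤ 1 - u ^ 4) :
    1 + lemg u ^ 2 = (1 + 2 * u ^ 2 - u ^ 4) ^ 2 / (1 + u ^ 4) ^ 2 := by
  have hc2 : Real.sqrt (1 - u ^ 4) ^ 2 = 1 - u ^ 4 := Real.sq_sqrt h
  have hden0 : (1 + u ^ 4) ≠ 0 := by positivity
  rw [lemg]
  field_simp
  nlinarith [hc2]

lemma one_sub_g4 {u : ℝ} (h : 0 ≤ 1 - u ^ 4) :
    1 - lemg u ^ 4 =
      ((1 - 2 * u ^ 2 - u ^ 4) * (1 + 2 * u ^ 2 - u ^ 4) / (1 + u ^ 4) ^ 2) ^ 2 := by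
  have h1 := one_sub_g_sq h
  have h2 := one_add_g_sq h
  have : 1 - lemg u ^ 4 = (1 - lemg u ^ 2) * (1 + lemg u ^ 2) := by ring
  rw [this, h1, h2]
  ring

lemma lemg_le_one {u : ℝ} (h0 : 0 ≤ u) (h1 : u ≤ 1) : lemg u ≤ 1 := by
  have h4 : 0 ≤ 1 - u ^ 4 := by
    have := pow_le_one₀ h0 h1 (n := 4)
    linarith
  have hsq := one_sub_g_sq h4
  have hg0 := lemg_nonneg h0
  have hpos : (0:ℝ) ≤ (1 - 2 * u ^ 2 - u ^ 4) ^ 2 / (1 + u ^ 4) ^ 2 := by positivity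
  nlinarith

lemma lemg_lt_one {u : ℝ} (h0 : 0 ≤ u) (hP : 0 < 1 - 2 * u ^ 2 - u ^ 4) : lemg u < 1 := by
  have h4 : 0 ≤ 1 - u ^ 4 := by nlinarith
  have hsq := one_sub_g_sq h4
  have hg0 := lemg_nonneg h0
  have hpos : (0:ℝ) < (1 - 2 * u ^ 2 - u ^ 4) ^ 2 / (1 + u ^ 4) ^ 2 := by positivity
  nlinarith

lemma key_deriv {u : ℝ} (h0 : 0 ≤ u) (hu : u ^ 2 < Real.sqrt 2 - 1) :
    HasDerivAt (fun v => lemF (lemg v) - 2 * lemF v) 0 u := by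
  have hs2 : Real.sqrt 2 ^ 2 = 2 := Real.sq_sqrt (by norm_num)
  have hs2n : 0 ≤ Real.sqrt 2 := Real.sqrt_nonneg 2
  have hs2lt : Real.sqrt 2 < 2 := by nlinarith
  have hu1 : u < 1 := by nlinarith
  have hP : 0 < 1 - 2 * u ^ 2 - u ^ 4 := by nlinarith
  have hQ : 0 < 1 + 2 * u ^ 2 - u ^ 4 := by nlinarith
  have h4 : 0 < 1 - u ^ 4 := by nlinarith
  have hg0 : 0 ≤ lemg u := lemg_nonneg h0
  have hg1 : lemg u < 1 := lemg_lt_one h0 hP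
  have hFg := (lemF_hasDeriv hg0 hg1).comp u (lemg_hasDeriv h4)
  have hFu := lemF_hasDeriv h0 hu1
  have hD := hFg.sub (hFu.const_mul 2)
  have hfun : (lemF ∘ lemg) = fun v => lemF (lemg v) := rfl
  rw [hfun] at hD
  refine hD.congr_deriv (Eq.symm ?_)
  have hg4 : 0 ≤ 1 - lemg u ^ 4 := by
    rw [one_sub_g4 h4.le]; positivity
  rw [lemI_eq _ hg4, lemI_eq _ h4.le, one_sub_g4 h4.le,
    Real.sqrt_sq (by positivity), Real.sqrt_eq_rpow]
  have hc0 : 0 < (1 - u ^ 4) ^ ((1:ℝ)/2) := Real.rpow_pos_of_pos h4 _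
  have hden0 : (0:ℝ) < 1 + u ^ 4 := by positivity
  rw [← Real.sqrt_eq_rpow]
  have hc0' : 0 < Real.sqrt (1 - u ^ 4) := Real.sqrt_pos.mpr h4
  field_simp
  ring

noncomputable def sstar : ℝ := Real.sqrt (Real.sqrt 2 - 1)

lemma sstar_facts : 0 ≤ sstar ∧ sstar ^ 2 = Real.sqrt 2 - 1 ∧ sstar ≤ 1 := by
  have hs2 : Real.sqrt 2 ^ 2 = 2 := Real.sq_sqrt (by norm_num)
  have hs2n : 0 ≤ Real.sqrt 2 := Real.sqrt_nonneg 2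
  have h1 : 1 ≤ Real.sqrt 2 := by nlinarith
  have h2 : Real.sqrt 2 < 2 := by nlinarith
  have hA0 : 0 ≤ sstar := Real.sqrt_nonneg _
  have hA2 : sstar ^ 2 = Real.sqrt 2 - 1 := Real.sq_sqrt (by linarith)
  exact ⟨hA0, hA2, by nlinarith⟩

lemma lemg_sstar : lemg sstar = 1 := by
  obtain ⟨hA0, hA2, hA1⟩ := sstar_facts
  have hs2 : Real.sqrt 2 ^ 2 = 2 := Real.sq_sqrt (by norm_num)
  have hs2n : 0 ≤ Real.sqrt 2 := Real.sqrt_nonneg 2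
  have h1 : 1 ≤ Real.sqrt 2 := by nlinarith
  have h2 : Real.sqrt 2 < 2 := by nlinarith
  have hA4 : sstar ^ 4 = 3 - 2 * Real.sqrt 2 := by
    have : sstar ^ 4 = (sstar ^ 2) ^ 2 := by ring
    rw [this, hA2]
    linear_combination hs2
  have h4 : 1 - sstar ^ 4 = 2 * Real.sqrt 2 - 2 := by rw [hA4]; ring
  have h4n : 0 ≤ 1 - sstar ^ 4 := by rw [h4]; linarith
  set cst := Real.sqrt (1 - sstar ^ 4) with hcst
  have hc0 : 0 ≤ cst := Real.sqrt_nonneg _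
  have hc2 : cst ^ 2 = 2 * Real.sqrt 2 - 2 := by rw [hcst, Real.sq_sqrt h4n, h4]
  have hkey : 2 * sstar * cst = 1 + sstar ^ 4 := by
    have hsq : (2 * sstar * cst) ^ 2 = (1 + sstar ^ 4) ^ 2 := by
      have e1 : (2 * sstar * cst) ^ 2 = 4 * (sstar ^ 2) * (cst ^ 2) := by ring
      rw [e1, hA2, hc2, hA4]
      linear_combination (4 : ℝ) * hs2
    have hb : 0 ≤ 1 + sstar ^ 4 := by positivity
    have ha : 0 ≤ 2 * sstar * cst := by positivity
    nlinarith [hsq, ha, hb]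
  rw [lemg, hkey]
  have : (1 : ℝ) + sstar ^ 4 ≠ 0 := by positivity
  field_simp

lemma lemF_cont : ContinuousOn lemF (Icc 0 1) := by
  have := continuousOn_primitive_interval' (μ := volume) lemI_int
    (a := 0) (by simp [Set.left_mem_uIcc])
  rwa [uIcc_of_le (by norm_num : (0:ℝ) ≤ 1)] at this

lemma lemg_cont : Continuous lemg := by
  apply Continuous.div
  · exact (continuous_const.mul continuous_id).mul
      (Real.continuous_sqrt.comp (continuous_const.sub (continuous_pow 4)))
  · exact continuous_const.add (continuous_pow 4)
  · intro x; positivity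

lemma doubling : ∀ u ∈ Icc (0:ℝ) sstar, lemF (lemg u) = 2 * lemF u := by
  obtain ⟨hA0, hA2, hA1⟩ := sstar_facts
  have hcont : ContinuousOn (fun v => lemF (lemg v) - 2 * lemF v) (Icc 0 sstar) := by
    have hmap : MapsTo lemg (Icc 0 sstar) (Icc 0 1) := by
      intro v hv
      exact ⟨lemg_nonneg hv.1, lemg_le_one hv.1 (le_trans hv.2 hA1)⟩
    have h1 : ContinuousOn (fun v => lemF (lemg v)) (Icc 0 sstar) :=
      lemF_cont.comp lemg_cont.continuousOn hmap
    have h2 : ContinuousOn lemF (Icc 0 sstar) :=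
      lemF_cont.mono (Icc_subset_Icc le_rfl hA1)
    exact h1.sub (continuousOn_const.mul h2)
  have hderiv : ∀ v ∈ Ico (0:ℝ) sstar,
      HasDerivWithinAt (fun v => lemF (lemg v) - 2 * lemF v) 0 (Ici v) v := by
    intro v hv
    have hv2 : v ^ 2 < Real.sqrt 2 - 1 := by
      have := pow_lt_pow_left₀ hv.2 hv.1 (n := 2) (by norm_num)
      rwa [hA2] at this
    exact (key_deriv hv.1 hv2).hasDerivWithinAt
  intro u hu
  have := constant_of_has_deriv_right_zero hcont hderiv u hu
  have hg0 : lemg 0 = 0 := by simp [lemg]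
  have hF0 : lemF 0 = 0 := by simp [lemF]
  rw [hg0, hF0] at this
  linarith [this]

/-- Euler's double-angle formula for the lemniscate sine:
sin_{2,4}(2x) = 2 sin_{2,4} x cos_{2,4} x / (1 + sin_{2,4}⁴ x). -/
theorem lemniscate_double_angle
    (F : ℝ → ℝ) (hF : ∀ s, F s = ∫ t in (0:ℝ)..s, (1 - t ^ 4) ^ (-(1/2) : ℝ))
    (pi24 : ℝ) (hpi : pi24 = 2 * F 1)
    (x : ℝ) (hx : x ∈ Set.Icc 0 (pi24 / 4))
    (s S : ℝ) (hs : s ∈ Set.Icc (0:ℝ) 1) (hS : S ∈ Set.Icc (0:ℝ) 1)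
    (hFs : F s = x) (hFS : F S = 2 * x)
    (c : ℝ) (hc : c = (1 - s ^ 4) ^ ((1:ℝ)/2)) :
    S = 2 * s * c / (1 + s ^ 4) := by
  obtain ⟨hA0, hA2, hA1⟩ := sstar_facts
  have hFeq : ∀ t, F t = lemF t := hF
  -- F sstar = F 1 / 2
  have hdba : lemF 1 = 2 * lemF sstar := by
    have := doubling sstar ⟨hA0, le_rfl⟩
    rwa [lemg_sstar] at this
  -- s ≤ sstar
  have hxle : x ≤ lemF sstar := by
    have h1 : x ≤ pi24 / 4 := hx.2
    rw [hpi, hFeq 1, hdba] at h1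
    linarith
  have hsle : s ≤ sstar := by
    by_contra h
    push_neg at h
    have := lemF_lt hA0 h hs.2
    rw [← hFeq s, hFs] at this
    linarith
  -- double angle at s
  have hds : lemF (lemg s) = 2 * x := by
    rw [doubling s ⟨hs.1, hsle⟩, ← hFeq s, hFs]
  -- injectivity
  have hgmem : lemg s ∈ Icc (0:ℝ) 1 := ⟨lemg_nonneg hs.1, lemg_le_one hs.1 hs.2⟩
  have hSF : lemF S = 2 * x := by rw [← hFeq S, hFS]
  have hSg : S = lemg s := by
    rcases lt_trichotomy S (lemg s) with h | h | h
    · have := lemF_lt hS.1 h hgmem.2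
      rw [hSF, hds] at this; linarith
    · exact h
    · have := lemF_lt hgmem.1 h hS.2
      rw [hSF, hds] at this; linarith
  rw [hSg, lemg, hc, Real.sqrt_eq_rpow]
end

section
/- Let F(s) = ∫₀ˢ (1 − t⁴)^{−3/4} dt for s ∈ [0,1] and π_{4/3,4} = 2F(1). For every x ∈ [0, π_{4/3,4}/4], if s, S ∈ [0,1] satisfy F(s) = x and F(S) = 2x, and c = (1 − s⁴)^{3/4}, then S = 2·s·c^{1/3}/(1 + 4·s⁴·c^{4/3})^{1/2}. -/
open Set MeasureTheory intervalIntegral Real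

noncomputable def eglf (t : ℝ) : ℝ := (1 - t ^ 4) ^ (-(3/4) : ℝ)

noncomputable def eglFi (y : ℝ) : ℝ := ∫ t in (0:ℝ)..y, eglf t

noncomputable def eglPhi (r : ℝ) : ℝ :=
  2 * r * (1 - r ^ 4) ^ ((1:ℝ)/4) / (1 + 4 * r ^ 4 * (1 - r ^ 4)) ^ ((1:ℝ)/2)

lemma eglf_meas : Measurable eglf := by unfold eglf; fun_prop

lemma eglf_int01 : IntervalIntegrable eglf volume 0 1 := by
  have hg : IntervalIntegrable (fun t : ℝ => (1 - t) ^ (-(3/4) : ℝ)) volume 0 1 := by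
    have := (intervalIntegrable_rpow' (r := (-(3/4) : ℝ)) (by norm_num)
      (a := 0) (b := 1)).comp_sub_left 1
    simpa using this.symm
  rw [intervalIntegrable_iff] at hg ⊢
  refine hg.mono' eglf_meas.aestronglyMeasurable ?_
  filter_upwards [ae_restrict_mem measurableSet_uIoc] with t ht
  rw [uIoc_of_le (by norm_num : (0:ℝ) ≤ 1)] at ht
  obtain ⟨ht0, ht1⟩ := ht
  have ht4 : t ^ 4 ≤ 1 := pow_le_one₀ ht0.le ht1
  have h1 : (0:ℝ) ≤ 1 - t ^ 4 := by linarith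
  simp only [eglf]
  rw [Real.norm_eq_abs, abs_of_nonneg (Real.rpow_nonneg h1 _)]
  rcases eq_or_lt_of_le ht1 with h | h
  · rw [eq_comm] at h; subst h; norm_num
  · have h2 : 0 < 1 - t := by linarith
    have ht3 : t ^ 3 ≤ 1 := pow_le_one₀ ht0.le h.le
    have h3 : 1 - t ≤ 1 - t ^ 4 := by nlinarith
    exact Real.rpow_le_rpow_of_nonpos h2 h3 (by norm_num)

lemma eglf_pos {t : ℝ} (h0 : -1 < t) (h1 : t < 1) : 0 < eglf t := by
  have h2 : t ^ 2 < 1 := by nlinarith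
  have : 0 < 1 - t ^ 4 := by nlinarith
  exact Real.rpow_pos_of_pos this _

lemma eglf_contAt {t : ℝ} (h0 : -1 < t) (h1 : t < 1) : ContinuousAt eglf t := by
  have h2 : t ^ 2 < 1 := by nlinarith
  have hb : (0:ℝ) < 1 - t ^ 4 := by nlinarith
  exact (continuousAt_const.sub (continuousAt_id.pow 4)).rpow_const (Or.inl hb.ne')

lemma eglf_int {b : ℝ} (h0 : 0 ≤ b) (h1 : b ≤ 1) : IntervalIntegrable eglf volume 0 b :=
  eglf_int01.mono_set (by
    rw [uIcc_of_le h0, uIcc_of_le (by norm_num : (0:ℝ) ≤ 1)]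
    exact Icc_subset_Icc le_rfl h1)

lemma eglFi_hasDeriv {y : ℝ} (h0 : 0 ≤ y) (h1 : y < 1) : HasDerivAt eglFi (eglf y) y :=
  integral_hasDerivAt_right (eglf_int h0 h1.le)
    (eglf_meas.stronglyMeasurable.stronglyMeasurableAtFilter)
    (eglf_contAt (by linarith) h1)

lemma eglFi_cont : ContinuousOn eglFi (Icc 0 1) := by
  have := continuousOn_primitive_interval (a := (0:ℝ)) (b := 1) (μ := volume) (f := eglf)
    (by
      rw [uIcc_of_le (by norm_num : (0:ℝ) ≤ 1)]
      exact (intervalIntegrable_iff_integrableOn_Icc_of_le (by norm_num)).mp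
        (by simpa using eglf_int01))
  unfold eglFi
  simpa [uIcc_of_le (by norm_num : (0:ℝ) ≤ 1)] using this

lemma eglFi_strictMono : StrictMonoOn eglFi (Icc (0:ℝ) 1) := by
  intro a ha b hb hab
  have hint : IntervalIntegrable eglf volume a b :=
    (eglf_int hb.1 hb.2).mono_set (by
      rw [uIcc_of_le hab.le, uIcc_of_le hb.1]
      exact Icc_subset_Icc ha.1 le_rfl)
  have hpos : 0 < ∫ t in a..b, eglf t := by
    refine intervalIntegral_pos_of_pos_on hint (fun t ht => ?_) hab
    exact eglf_pos (by nlinarith [ha.1, ht.1]) (lt_of_lt_of_le ht.2 hb.2)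
  have hsub : eglFi b - eglFi a = ∫ t in a..b, eglf t := by
    rw [eglFi, eglFi, integral_interval_sub_left (eglf_int hb.1 hb.2) (eglf_int ha.1 ha.2)]
  linarith

lemma egl_u_pos {r : ℝ} (h0 : 0 ≤ r) (h1 : r ≤ 1) : 0 < 1 + 4 * r ^ 4 * (1 - r ^ 4) := by
  have h4 : r ^ 4 ≤ 1 := pow_le_one₀ h0 h1
  nlinarith [pow_nonneg h0 4]

lemma eglPhi_mem {r : ℝ} (h0 : 0 ≤ r) (h1 : r ≤ 1) : eglPhi r ∈ Icc (0:ℝ) 1 := by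
  have hw : (0:ℝ) ≤ 1 - r ^ 4 := by nlinarith [pow_le_one₀ h0 h1 (n := 4)]
  have hu := egl_u_pos h0 h1
  have hU : (0:ℝ) < (1 + 4 * r ^ 4 * (1 - r ^ 4)) ^ ((1:ℝ)/2) := Real.rpow_pos_of_pos hu _
  have hW : (0:ℝ) ≤ (1 - r ^ 4) ^ ((1:ℝ)/4) := Real.rpow_nonneg hw _
  have hW4 : ((1 - r ^ 4) ^ ((1:ℝ)/4)) ^ 4 = 1 - r ^ 4 := by
    rw [← Real.rpow_natCast ((1 - r ^ 4) ^ ((1:ℝ)/4)) 4, ← Real.rpow_mul hw]; norm_num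
  have hU2 : ((1 + 4 * r ^ 4 * (1 - r ^ 4)) ^ ((1:ℝ)/2)) ^ 2 = 1 + 4 * r ^ 4 * (1 - r ^ 4) := by
    rw [← Real.rpow_natCast _ 2, ← Real.rpow_mul hu.le]; norm_num
  constructor
  · exact div_nonneg (by positivity) hU.le
  · rw [eglPhi, div_le_one hU]
    refine le_of_pow_le_pow_left₀ (n := 4) (by norm_num) hU.le ?_
    have e1 : (2 * r * (1 - r ^ 4) ^ ((1:ℝ)/4)) ^ 4 = 16 * r ^ 4 * (1 - r ^ 4) := by
      rw [mul_pow, mul_pow, hW4]; ring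
    have e2 : ((1 + 4 * r ^ 4 * (1 - r ^ 4)) ^ ((1:ℝ)/2)) ^ 4
        = (1 + 4 * r ^ 4 * (1 - r ^ 4)) ^ 2 := by
      rw [show (4:ℕ) = 2 * 2 from rfl, pow_mul, hU2]
    rw [e1, e2]
    nlinarith [sq_nonneg (1 - 4 * r ^ 4 * (1 - r ^ 4)), pow_nonneg h0 4]

lemma egl_W4 {r : ℝ} (hw : (0:ℝ) ≤ 1 - r ^ 4) :
    ((1 - r ^ 4) ^ ((1:ℝ)/4)) ^ 4 = 1 - r ^ 4 := by
  rw [← Real.rpow_natCast ((1 - r ^ 4) ^ ((1:ℝ)/4)) 4, ← Real.rpow_mul hw]; norm_num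

lemma egl_U2 {r : ℝ} (hu : (0:ℝ) ≤ 1 + 4 * r ^ 4 * (1 - r ^ 4)) :
    ((1 + 4 * r ^ 4 * (1 - r ^ 4)) ^ ((1:ℝ)/2)) ^ 2 = 1 + 4 * r ^ 4 * (1 - r ^ 4) := by
  rw [← Real.rpow_natCast _ 2, ← Real.rpow_mul hu]; norm_num

lemma egl_U4 {r : ℝ} (hu : (0:ℝ) ≤ 1 + 4 * r ^ 4 * (1 - r ^ 4)) :
    ((1 + 4 * r ^ 4 * (1 - r ^ 4)) ^ ((1:ℝ)/2)) ^ 4 = (1 + 4 * r ^ 4 * (1 - r ^ 4)) ^ 2 := by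
  have h : ((1 + 4 * r ^ 4 * (1 - r ^ 4)) ^ ((1:ℝ)/2)) ^ 4
      = (((1 + 4 * r ^ 4 * (1 - r ^ 4)) ^ ((1:ℝ)/2)) ^ 2) ^ 2 := by ring
  rw [h, egl_U2 hu]

lemma eglPhi_pow4 {r : ℝ} (hw : (0:ℝ) ≤ 1 - r ^ 4) (hu : (0:ℝ) < 1 + 4 * r ^ 4 * (1 - r ^ 4)) :
    eglPhi r ^ 4 = 16 * r ^ 4 * (1 - r ^ 4) / (1 + 4 * r ^ 4 * (1 - r ^ 4)) ^ 2 := by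
  rw [eglPhi, div_pow, mul_pow, mul_pow, egl_W4 hw, egl_U4 hu.le]
  ring_nf

lemma eglf_phi {r : ℝ} (h0 : 0 ≤ r) (h1 : r ^ 4 < 1/2) :
    eglf (eglPhi r) = (1 + 4 * r ^ 4 * (1 - r ^ 4)) ^ ((3:ℝ)/2) / (1 - 2 * r ^ 4) ^ 3 := by
  have hw : (0:ℝ) < 1 - r ^ 4 := by linarith
  have hr1 : r < 1 := by
    by_contra h
    push_neg at h
    have : (1:ℝ) ≤ r ^ 4 := one_le_pow₀ h
    linarith
  have hu : (0:ℝ) < 1 + 4 * r ^ 4 * (1 - r ^ 4) := egl_u_pos h0 hr1.le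
  have h2a : (0:ℝ) < 1 - 2 * r ^ 4 := by linarith
  have hb : 1 - eglPhi r ^ 4 = ((1 - 2 * r ^ 4) ^ 2 / (1 + 4 * r ^ 4 * (1 - r ^ 4))) ^ 2 := by
    rw [eglPhi_pow4 hw.le hu]
    field_simp
    ring
  have hX : (0:ℝ) ≤ (1 - 2 * r ^ 4) ^ 2 / (1 + 4 * r ^ 4 * (1 - r ^ 4)) := by positivity
  rw [eglf, hb, ← Real.rpow_natCast ((1 - 2 * r ^ 4) ^ 2 / (1 + 4 * r ^ 4 * (1 - r ^ 4))) 2,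
    ← Real.rpow_mul hX]
  norm_num
  norm_num
  rw [Real.rpow_neg hX, Real.div_rpow (sq_nonneg _) hu.le,
    ← Real.rpow_natCast (1 - 2 * r ^ 4) 2, ← Real.rpow_mul h2a.le]
  norm_num

lemma egl_key_deriv {r : ℝ} (h0 : 0 ≤ r) (h1 : r ^ 4 < 1/2) :
    HasDerivAt (fun t => eglFi (eglPhi t) - 2 * eglFi t) 0 r := by
  have hr1 : r < 1 := by
    by_contra h
    push_neg at h
    have : (1:ℝ) ≤ r ^ 4 := one_le_pow₀ h
    linarith
  have hw : (0:ℝ) < 1 - r ^ 4 := by linarith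
  have hu : (0:ℝ) < 1 + 4 * r ^ 4 * (1 - r ^ 4) := egl_u_pos h0 hr1.le
  have h2a : (0:ℝ) < 1 - 2 * r ^ 4 := by linarith
  have hUne : (1 + 4 * r ^ 4 * (1 - r ^ 4)) ^ ((1:ℝ)/2) ≠ 0 := (Real.rpow_pos_of_pos hu _).ne'
  -- derivatives of building blocks
  have hd1 : HasDerivAt (fun t : ℝ => 1 - t ^ 4) (-(4 * r ^ 3)) r := by
    simpa using (hasDerivAt_pow 4 r).const_sub 1
  have hdW : HasDerivAt (fun t : ℝ => (1 - t ^ 4) ^ ((1:ℝ)/4))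
      (-(4 * r ^ 3) * ((1:ℝ)/4) * (1 - r ^ 4) ^ ((1:ℝ)/4 - 1)) r :=
    hd1.rpow_const (Or.inl hw.ne')
  have h2r : HasDerivAt (fun t : ℝ => 2 * t) 2 r := by
    simpa using (hasDerivAt_id r).const_mul 2
  have hdN : HasDerivAt (fun t : ℝ => 2 * t * (1 - t ^ 4) ^ ((1:ℝ)/4))
      (2 * ((1 - r ^ 4) ^ ((1:ℝ)/4))
        + 2 * r * (-(4 * r ^ 3) * ((1:ℝ)/4) * (1 - r ^ 4) ^ ((1:ℝ)/4 - 1))) r := h2r.mul hdW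
  have hd2 : HasDerivAt (fun t : ℝ => 1 + 4 * t ^ 4 * (1 - t ^ 4)) (16 * r ^ 3 - 32 * r ^ 7) r := by
    have ha : HasDerivAt (fun t : ℝ => 4 * t ^ 4) (4 * (4 * r ^ 3)) r := by
      simpa using (hasDerivAt_pow 4 r).const_mul 4
    have := (ha.mul hd1).const_add 1
    exact this.congr_deriv (by ring)
  have hdU : HasDerivAt (fun t : ℝ => (1 + 4 * t ^ 4 * (1 - t ^ 4)) ^ ((1:ℝ)/2))
      ((16 * r ^ 3 - 32 * r ^ 7) * ((1:ℝ)/2) * (1 + 4 * r ^ 4 * (1 - r ^ 4)) ^ ((1:ℝ)/2 - 1)) r :=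
    hd2.rpow_const (Or.inl hu.ne')
  -- derivative of eglPhi, in clean form
  have hdPhi : HasDerivAt eglPhi
      (2 * (1 - 2 * r ^ 4) ^ 3 * ((1 - r ^ 4) ^ (-(3/4) : ℝ))
        * ((1 + 4 * r ^ 4 * (1 - r ^ 4)) ^ (-(3/2) : ℝ))) r := by
    have hdiv := hdN.div hdU hUne
    have hP : (1 - r ^ 4) ^ ((1:ℝ)/4 - 1) = (1 - r ^ 4) ^ ((1:ℝ)/4) / (1 - r ^ 4) := by
      rw [Real.rpow_sub hw, Real.rpow_one]
    have hQ : (1 + 4 * r ^ 4 * (1 - r ^ 4)) ^ ((1:ℝ)/2 - 1)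
        = (1 + 4 * r ^ 4 * (1 - r ^ 4)) ^ ((1:ℝ)/2) / (1 + 4 * r ^ 4 * (1 - r ^ 4)) := by
      rw [Real.rpow_sub hu, Real.rpow_one]
    have hw34 : (1 - r ^ 4) ^ (-(3/4) : ℝ) = (1 - r ^ 4) ^ ((1:ℝ)/4) / (1 - r ^ 4) := by
      rw [show (-(3/4) : ℝ) = (1:ℝ)/4 - 1 by norm_num, hP]
    have hu32 : (1 + 4 * r ^ 4 * (1 - r ^ 4)) ^ (-(3/2) : ℝ)
        = (1 + 4 * r ^ 4 * (1 - r ^ 4)) ^ ((1:ℝ)/2) / (1 + 4 * r ^ 4 * (1 - r ^ 4)) ^ 2 := by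
      rw [show (-(3/2) : ℝ) = (1:ℝ)/2 - 2 by norm_num, Real.rpow_sub hu,
        show ((2:ℝ)) = ((2:ℕ):ℝ) by norm_num, Real.rpow_natCast]
    have heq : ((2 * ((1 - r ^ 4) ^ ((1:ℝ)/4))
        + 2 * r * (-(4 * r ^ 3) * ((1:ℝ)/4) * (1 - r ^ 4) ^ ((1:ℝ)/4 - 1)))
          * ((1 + 4 * r ^ 4 * (1 - r ^ 4)) ^ ((1:ℝ)/2))
        - (2 * r * (1 - r ^ 4) ^ ((1:ℝ)/4))
          * ((16 * r ^ 3 - 32 * r ^ 7) * ((1:ℝ)/2)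
            * (1 + 4 * r ^ 4 * (1 - r ^ 4)) ^ ((1:ℝ)/2 - 1)))
          / ((1 + 4 * r ^ 4 * (1 - r ^ 4)) ^ ((1:ℝ)/2)) ^ 2
        = 2 * (1 - 2 * r ^ 4) ^ 3 * ((1 - r ^ 4) ^ (-(3/4) : ℝ))
            * ((1 + 4 * r ^ 4 * (1 - r ^ 4)) ^ (-(3/2) : ℝ)) := by
      rw [hP, hQ, hw34, hu32, egl_U2 hu.le]
      field_simp
      ring
    rw [← heq]
    exact hdiv
  -- strict upper bound for eglPhi r
  have hφmem := eglPhi_mem h0 hr1.le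
  have hφlt1 : eglPhi r < 1 := by
    have hp4 : eglPhi r ^ 4 < 1 := by
      rw [eglPhi_pow4 hw.le hu, div_lt_one (by positivity)]
      nlinarith [pow_pos h2a 4]
    by_contra h
    push_neg at h
    have : (1:ℝ) ≤ eglPhi r ^ 4 := one_le_pow₀ h
    linarith
  -- assemble
  have hmain := ((eglFi_hasDeriv hφmem.1 hφlt1).comp r hdPhi).sub
    ((eglFi_hasDeriv h0 hr1).const_mul 2)
  have hzero : eglf (eglPhi r)
      * (2 * (1 - 2 * r ^ 4) ^ 3 * ((1 - r ^ 4) ^ (-(3/4) : ℝ))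
        * ((1 + 4 * r ^ 4 * (1 - r ^ 4)) ^ (-(3/2) : ℝ)))
      - 2 * eglf r = 0 := by
    rw [eglf_phi h0 h1, eglf]
    have huu : (1 + 4 * r ^ 4 * (1 - r ^ 4)) ^ ((3:ℝ)/2)
        * (1 + 4 * r ^ 4 * (1 - r ^ 4)) ^ (-(3/2) : ℝ) = 1 := by
      rw [← Real.rpow_add hu]; norm_num
    have hC : ((1 - 2 * r ^ 4 : ℝ)) ^ 3 ≠ 0 := (pow_pos h2a 3).ne'
    have e1 : ∀ A B C D : ℝ, C ≠ 0 → A * D = 1 →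
        A / C * (2 * C * B * D) - 2 * B = 0 := by
      intro A B C D hCne hAD
      field_simp
      linear_combination (2 * B) * hAD
    exact e1 _ _ _ _ hC huu
  rw [hzero] at hmain
  exact hmain

noncomputable def eglr0 : ℝ := ((1:ℝ)/2) ^ ((1:ℝ)/4)

lemma eglr0_pow : eglr0 ^ 4 = 1/2 := by
  rw [eglr0, ← Real.rpow_natCast (((1:ℝ)/2) ^ ((1:ℝ)/4)) 4,
    ← Real.rpow_mul (by norm_num : (0:ℝ) ≤ 1/2)]
  norm_num

lemma eglr0_pos : 0 < eglr0 := Real.rpow_pos_of_pos (by norm_num) _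

lemma eglr0_lt_one : eglr0 < 1 :=
  Real.rpow_lt_one (by norm_num) (by norm_num) (by norm_num)

lemma eglPhi_cont : ContinuousOn eglPhi (Icc (0:ℝ) 1) := by
  unfold eglPhi
  refine ContinuousOn.div ?_ ?_ ?_
  · exact (continuousOn_const.mul continuousOn_id).mul
      ((continuousOn_const.sub (continuousOn_id.pow 4)).rpow_const
        fun x _ => Or.inr (by norm_num))
  · exact (continuousOn_const.add ((continuousOn_const.mul (continuousOn_id.pow 4)).mul
      (continuousOn_const.sub (continuousOn_id.pow 4)))).rpow_const
        fun x _ => Or.inr (by norm_num)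
  · exact fun x hx => (Real.rpow_pos_of_pos (egl_u_pos hx.1 hx.2) _).ne'

lemma eglPhi_zero : eglPhi 0 = 0 := by simp [eglPhi]

lemma eglFi_zero : eglFi 0 = 0 := by rw [eglFi, intervalIntegral.integral_same]

lemma egl_double {r : ℝ} (hr : r ∈ Icc 0 eglr0) : eglFi (eglPhi r) = 2 * eglFi r := by
  have hr01 : eglr0 ≤ 1 := eglr0_lt_one.le
  have hsub : Icc (0:ℝ) eglr0 ⊆ Icc (0:ℝ) 1 := Icc_subset_Icc le_rfl hr01
  have hcont : ContinuousOn (fun t => eglFi (eglPhi t) - 2 * eglFi t) (Icc 0 eglr0) := by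
    refine ContinuousOn.sub ?_ (continuousOn_const.mul (eglFi_cont.mono hsub))
    exact eglFi_cont.comp (eglPhi_cont.mono hsub)
      fun t ht => eglPhi_mem ht.1 (le_trans ht.2 hr01)
  have hderiv : ∀ t ∈ Ico (0:ℝ) eglr0,
      HasDerivWithinAt (fun t => eglFi (eglPhi t) - 2 * eglFi t) 0 (Ici t) t := by
    intro t ht
    refine (egl_key_deriv ht.1 ?_).hasDerivWithinAt
    have h4 : t ^ 4 < eglr0 ^ 4 := by
      exact pow_lt_pow_left₀ ht.2 ht.1 (by norm_num)
    rwa [eglr0_pow] at h4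
  have hc := constant_of_has_deriv_right_zero hcont hderiv r hr
  simp only [eglPhi_zero, eglFi_zero, mul_zero, sub_zero] at hc
  linarith

lemma eglPhi_r0 : eglPhi eglr0 = 1 := by
  have h4 : eglr0 ^ 4 = 1/2 := eglr0_pow
  rw [eglPhi, h4]
  rw [show (1 : ℝ) - 1/2 = 1/2 by norm_num,
    show 1 + 4 * (1/2 : ℝ) * (1/2) = 2 by norm_num]
  have hr2 : eglr0 * ((1:ℝ)/2) ^ ((1:ℝ)/4) = ((1:ℝ)/2) ^ ((1:ℝ)/2) := by
    rw [eglr0, ← Real.rpow_add (by norm_num : (0:ℝ) < 1/2)]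
    norm_num
  have h12 : ((1:ℝ)/2) ^ ((1:ℝ)/2) = ((2:ℝ) ^ ((1:ℝ)/2))⁻¹ := by
    rw [one_div, ← Real.rpow_neg_one (2:ℝ), ← Real.rpow_mul (by norm_num : (0:ℝ) ≤ 2)]
    rw [← Real.rpow_neg (by norm_num : (0:ℝ) ≤ 2)]
    norm_num
  have h2 : (2:ℝ) ^ ((1:ℝ)/2) * (2:ℝ) ^ ((1:ℝ)/2) = 2 := by
    rw [← Real.rpow_add (by norm_num : (0:ℝ) < 2)]; norm_num
  have h2pos : (0:ℝ) < (2:ℝ) ^ ((1:ℝ)/2) := Real.rpow_pos_of_pos (by norm_num) _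
  rw [mul_assoc, hr2, h12]
  field_simp
  linarith [h2]

/-- Edmunds–Gurka–Lang double-angle formula:
sin_{4/3,4}(2x) = 2 sin_{4/3,4} x cos_{4/3,4}^{1/3} x / (1 + 4 sin_{4/3,4}⁴ x cos_{4/3,4}^{4/3} x)^{1/2}. -/
theorem egl_double_angle
    (F : ℝ → ℝ) (hF : ∀ s, F s = ∫ t in (0:ℝ)..s, (1 - t ^ 4) ^ (-(3/4) : ℝ))
    (pi434 : ℝ) (hpi : pi434 = 2 * F 1)
    (x : ℝ) (hx : x ∈ Set.Icc 0 (pi434 / 4))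
    (s S : ℝ) (hs : s ∈ Set.Icc (0:ℝ) 1) (hS : S ∈ Set.Icc (0:ℝ) 1)
    (hFs : F s = x) (hFS : F S = 2 * x)
    (c : ℝ) (hc : c = (1 - s ^ 4) ^ ((3:ℝ)/4)) :
    S = 2 * s * c ^ ((1:ℝ)/3) / (1 + 4 * s ^ 4 * c ^ ((4:ℝ)/3)) ^ ((1:ℝ)/2) := by
  have hFeq : ∀ y, F y = eglFi y := fun y => (hF y).trans rfl
  obtain ⟨hs0, hs1⟩ := hs
  obtain ⟨hS0, hS1⟩ := hS
  have hr01 : eglr0 ≤ 1 := eglr0_lt_one.le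
  have hr0mem : eglr0 ∈ Icc (0:ℝ) 1 := ⟨eglr0_pos.le, hr01⟩
  have hFi1 : eglFi 1 = pi434 / 2 := by rw [hpi, hFeq 1]; ring
  have hFr0 : eglFi eglr0 = pi434 / 4 := by
    have h := egl_double ⟨eglr0_pos.le, le_rfl⟩
    rw [eglPhi_r0, hFi1] at h
    linarith
  have hsr0 : s ≤ eglr0 := by
    by_contra h
    push_neg at h
    have hlt := eglFi_strictMono hr0mem ⟨hs0, hs1⟩ h
    rw [hFr0, ← hFeq s, hFs] at hlt
    linarith [hx.2]
  have hkey := egl_double ⟨hs0, hsr0⟩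
  have hSval : eglFi S = eglFi (eglPhi s) := by
    rw [hkey, ← hFeq s, ← hFeq S, hFs, hFS]
  have hSphi : S = eglPhi s :=
    eglFi_strictMono.injOn ⟨hS0, hS1⟩ (eglPhi_mem hs0 hs1) hSval
  have hw : (0:ℝ) ≤ 1 - s ^ 4 := by nlinarith [pow_le_one₀ hs0 hs1 (n := 4)]
  have h13 : ((1 - s ^ 4) ^ ((3:ℝ)/4)) ^ ((1:ℝ)/3) = (1 - s ^ 4) ^ ((1:ℝ)/4) := by
    rw [← Real.rpow_mul hw]; norm_num
  have h43 : ((1 - s ^ 4) ^ ((3:ℝ)/4)) ^ ((4:ℝ)/3) = 1 - s ^ 4 := by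
    rw [← Real.rpow_mul hw]; norm_num
  rw [hSphi, hc, h13, h43]
  rfl
end

section
/- Let p, q > 1. Let F(s) = ∫₀ˢ (1 − t^q)^{−1/p} dt for s ∈ [0,1], π_{p,q} = 2F(1), and let u : [0, π_{p,q}/2] → [0,1] be the inverse function of F. Then u is continuously differentiable on [0, π_{p,q}/2) with u(0) = 0, u′(0) = 1, u′(x) = (1 − u(x)^q)^{1/p} > 0 on [0, π_{p,q}/2), and on (0, π_{p,q}/2) the function x ↦ u′(x)^{p−1} is differentiable with derivative −((p−1)q/p)·u(x)^{q−1}. -/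
open Set MeasureTheory Filter Topology

/-- The generalized sine u = sin_{p,q}, defined as the inverse of
F(s) = ∫₀ˢ (1-t^q)^{-1/p} dt on [0, π_{p,q}/2], satisfies u(0) = 0, u'(0) = 1,
u'(x) = (1 - u(x)^q)^{1/p} > 0 on [0, π_{p,q}/2) (with u' continuous there), and
(u'^{p-1})' = -((p-1)q/p) u^{q-1} on (0, π_{p,q}/2); i.e. u solves the
p-Laplacian initial-value problem. -/
theorem generalized_sine_solves_pLaplacian
    (p q : ℝ) (hp : 1 < p) (hq : 1 < q)
    (F : ℝ → ℝ) (hF : ∀ s, F s = ∫ t in (0:ℝ)..s, (1 - t ^ q) ^ (-(1/p)))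
    (pipq : ℝ) (hpi : pipq = 2 * F 1)
    (u : ℝ → ℝ)
    (hmaps : ∀ x ∈ Set.Icc 0 (pipq / 2), u x ∈ Set.Icc (0:ℝ) 1)
    (hinv₁ : ∀ s ∈ Set.Icc (0:ℝ) 1, u (F s) = s)
    (hinv₂ : ∀ x ∈ Set.Icc 0 (pipq / 2), F (u x) = x) :
    u 0 = 0 ∧
    (1 - u 0 ^ q) ^ (1/p) = 1 ∧
    (∀ x ∈ Set.Ico 0 (pipq / 2),
      HasDerivWithinAt u ((1 - u x ^ q) ^ (1/p)) (Set.Icc 0 (pipq / 2)) x ∧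
      0 < (1 - u x ^ q) ^ (1/p)) ∧
    ContinuousOn (fun x => (1 - u x ^ q) ^ (1/p)) (Set.Ico 0 (pipq / 2)) ∧
    (∀ x ∈ Set.Ioo 0 (pipq / 2),
      HasDerivAt (fun y => ((1 - u y ^ q) ^ (1/p)) ^ (p - 1))
        (-((p - 1) * q / p) * u x ^ (q - 1)) x) := by
  have hp0 : (0:ℝ) < p := one_pos.trans hp
  have hq0 : (0:ℝ) < q := one_pos.trans hq
  set g : ℝ → ℝ := fun t => (1 - t ^ q) ^ (-(1/p)) with hgdef
  have hFg : ∀ s, F s = ∫ t in (0:ℝ)..s, g t := hF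
  have hF0 : F 0 = 0 := by rw [hFg]; exact intervalIntegral.integral_same
  have hu0 : u 0 = 0 := by
    have := hinv₁ 0 (by norm_num)
    rwa [hF0] at this
  have hpart2 : (1 - u 0 ^ q) ^ (1/p) = 1 := by
    rw [hu0, Real.zero_rpow hq0.ne', sub_zero, Real.one_rpow]
  -- positivity of 1 - t^q for |t| < 1
  have hpos1 : ∀ t : ℝ, |t| < 1 → 0 < 1 - t ^ q := by
    intro t ht
    have h1 : |t ^ q| ≤ |t| ^ q := Real.abs_rpow_le_abs_rpow t q
    have h2 : |t| ^ q < 1 := Real.rpow_lt_one (abs_nonneg t) ht hq0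
    have h3 : t ^ q < 1 := lt_of_le_of_lt ((le_abs_self _).trans h1) h2
    linarith
  have hgcont : ∀ t : ℝ, 1 - t ^ q ≠ 0 → ContinuousAt g t := by
    intro t ht
    have h1 : ContinuousAt (fun t : ℝ => 1 - t ^ q) t :=
      continuousAt_const.sub (Real.continuousAt_rpow_const t q (Or.inr hq0.le))
    exact h1.rpow_const (Or.inl ht)
  have hmeasg : Measurable g :=
    (measurable_const.sub (measurable_id.pow measurable_const)).pow measurable_const
  by_cases hI : IntervalIntegrable g volume 0 1
  · -- main (integrable) case
    have hIs : ∀ s ∈ Icc (0:ℝ) 1, IntervalIntegrable g volume 0 s := by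
      intro s hs
      apply hI.mono_set
      rw [uIcc_of_le hs.1, uIcc_of_le zero_le_one]
      exact Icc_subset_Icc le_rfl hs.2
    have hhalf : pipq / 2 = F 1 := by rw [hpi]; ring
    have hFmono : StrictMonoOn F (Icc (0:ℝ) 1) := by
      intro a ha b hb hab
      have hint_ab : IntervalIntegrable g volume a b := by
        apply hI.mono_set
        rw [uIcc_of_le hab.le, uIcc_of_le zero_le_one]
        exact Icc_subset_Icc ha.1 hb.2
      have hsub : F b - F a = ∫ t in a..b, g t := by
        rw [hFg, hFg]
        exact intervalIntegral.integral_interval_sub_left (hIs b hb) (hIs a ha)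
      have hposint : 0 < ∫ t in a..b, g t := by
        apply intervalIntegral.intervalIntegral_pos_of_pos_on hint_ab _ hab
        intro t ht
        have habs : |t| < 1 := abs_lt.2 ⟨by linarith [ha.1, ht.1], lt_of_lt_of_le ht.2 hb.2⟩
        exact Real.rpow_pos_of_pos (hpos1 t habs) _
      linarith
    have hmF : MonotoneOn F (Icc (0:ℝ) 1) := hFmono.monotoneOn
    have hFmem : ∀ s ∈ Icc (0:ℝ) 1, F s ∈ Icc 0 (pipq/2) := by
      intro s hs
      constructor
      · rw [← hF0]
        exact hmF ⟨le_rfl, zero_le_one⟩ hs hs.1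
      · rw [hhalf]
        exact hmF hs ⟨zero_le_one, le_rfl⟩ hs.2
    have humono : StrictMonoOn u (Icc 0 (pipq/2)) := by
      intro a ha b hb hab
      by_contra h
      push_neg at h
      have := hmF (hmaps b hb) (hmaps a ha) h
      rw [hinv₂ a ha, hinv₂ b hb] at this
      exact absurd this (not_le.2 hab)
    have hult : ∀ x ∈ Ico 0 (pipq/2), u x < 1 := by
      intro x hx
      rcases lt_or_eq_of_le (hmaps x (Ico_subset_Icc_self hx)).2 with h | h
      · exact h
      · exfalso
        have h2 := hinv₂ x (Ico_subset_Icc_self hx)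
        rw [h] at h2
        rw [← hhalf] at h2
        linarith [hx.2]
    have hugt : ∀ x ∈ Icc 0 (pipq/2), 0 < x → 0 < u x := by
      intro x hx h0
      rcases (hmaps x hx).1.lt_or_eq with h | h
      · exact h
      · exfalso
        have h2 := hinv₂ x hx
        rw [← h, hF0] at h2
        linarith
    have hFderiv : ∀ s ∈ Ico (0:ℝ) 1, HasDerivAt F (g s) s := by
      intro s hs
      have hne : 1 - s ^ q ≠ 0 := (hpos1 s (abs_lt.2 ⟨by linarith [hs.1], hs.2⟩)).ne'
      have hd := intervalIntegral.integral_hasDerivAt_right (hIs s ⟨hs.1, hs.2.le⟩)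
        hmeasg.stronglyMeasurable.stronglyMeasurableAtFilter (hgcont s hne)
      have hFe : F = fun x => ∫ t in (0:ℝ)..x, g t := funext hFg
      rw [hFe]
      exact hd
    -- continuity of u within the interval
    have hucont : ∀ x ∈ Ico 0 (pipq/2), ContinuousWithinAt u (Icc 0 (pipq/2)) x := by
      intro x hx
      have hxI : x ∈ Icc 0 (pipq/2) := Ico_subset_Icc_self hx
      have hr : ContinuousWithinAt u (Ici x) x := by
        apply humono.continuousWithinAt_right_of_exists_between (Icc_mem_nhdsGE_of_mem hx)
        intro b hb
        have hub0 : 0 ≤ u x := (hmaps x hxI).1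
        have hux1 : u x < 1 := hult x hx
        have hv0 : (0:ℝ) ≤ min b 1 := le_min (hub0.trans hb.le) zero_le_one
        have hv1 : min b 1 ≤ 1 := min_le_right _ _
        refine ⟨F (min b 1), hFmem _ ⟨hv0, hv1⟩, ?_⟩
        rw [hinv₁ _ ⟨hv0, hv1⟩]
        exact ⟨lt_min hb hux1, min_le_left _ _⟩
      rcases eq_or_lt_of_le hx.1 with h0 | h0
      · exact (hr.mono (fun y hy => h0 ▸ hy.1 : Icc 0 (pipq/2) ⊆ Ici x))
      · have hl : ContinuousWithinAt u (Iic x) x := by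
          apply humono.continuousWithinAt_left_of_exists_between
            (Icc_mem_nhdsLE_of_mem ⟨h0, hx.2.le⟩)
          intro b hb
          have hux0 : 0 < u x := hugt x hxI h0
          have hux1 : u x ≤ 1 := (hmaps x hxI).2
          have hv0 : (0:ℝ) ≤ max b 0 := le_max_right _ _
          have hvlt : max b 0 < u x := max_lt hb hux0
          refine ⟨F (max b 0), hFmem _ ⟨hv0, hvlt.le.trans hux1⟩, ?_⟩
          rw [hinv₁ _ ⟨hv0, hvlt.le.trans hux1⟩]
          exact ⟨le_max_left _ _, hvlt⟩
        exact (hr.union hl).mono (fun y _ => le_total x y)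
    -- derivative of u
    have huderiv : ∀ x ∈ Ico 0 (pipq/2),
        HasDerivWithinAt u ((1 - u x ^ q) ^ (1/p)) (Icc 0 (pipq/2)) x := by
      intro x hx
      have hxI : x ∈ Icc 0 (pipq/2) := Ico_subset_Icc_self hx
      have hux1 : u x < 1 := hult x hx
      have hux0 : 0 ≤ u x := (hmaps x hxI).1
      have hgx : 0 < 1 - u x ^ q := hpos1 _ (abs_lt.2 ⟨by linarith, hux1⟩)
      have hgxpos : 0 < g (u x) := Real.rpow_pos_of_pos hgx _
      have hFd : HasDerivAt F (g (u x)) (u x) := hFderiv _ ⟨hux0, hux1⟩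
      have hslopeF : Tendsto (slope F (u x)) (𝓝[≠] (u x)) (𝓝 (g (u x))) :=
        hasDerivAt_iff_tendsto_slope.1 hFd
      have huinj : ∀ y ∈ Icc 0 (pipq/2), y ≠ x → u y ≠ u x := by
        intro y hy hyx h
        apply hyx
        rw [← hinv₂ y hy, ← hinv₂ x hxI, h]
      have htend_u : Tendsto u (𝓝[Icc 0 (pipq/2) \ {x}] x) (𝓝[≠] (u x)) := by
        rw [tendsto_nhdsWithin_iff]
        constructor
        · exact ((hucont x hx).mono_left (nhdsWithin_mono x diff_subset))
        · filter_upwards [self_mem_nhdsWithin] with y hy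
          exact huinj y hy.1 hy.2
      have hinvcont : Tendsto (fun z : ℝ => z⁻¹) (𝓝 (g (u x))) (𝓝 (g (u x))⁻¹) :=
        (continuousAt_inv₀ hgxpos.ne').tendsto
      have hcomp : Tendsto (fun y => (slope F (u x) (u y))⁻¹)
          (𝓝[Icc 0 (pipq/2) \ {x}] x) (𝓝 (g (u x))⁻¹) :=
        hinvcont.comp (hslopeF.comp htend_u)
      have hkey : HasDerivWithinAt u ((g (u x))⁻¹) (Icc 0 (pipq/2)) x := by
        rw [hasDerivWithinAt_iff_tendsto_slope]
        apply hcomp.congr'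
        filter_upwards [self_mem_nhdsWithin] with y hy
        rw [slope_def_field, slope_def_field, hinv₂ y hy.1, hinv₂ x hxI, inv_div]
      have hval : (g (u x))⁻¹ = (1 - u x ^ q) ^ (1/p) := by
        rw [hgdef]
        simp only []
        rw [Real.rpow_neg hgx.le, inv_inv]
      rwa [hval] at hkey
    refine ⟨hu0, hpart2, ?_, ?_, ?_⟩
    · intro x hx
      have hxI : x ∈ Icc 0 (pipq/2) := Ico_subset_Icc_self hx
      have hgx : 0 < 1 - u x ^ q :=
        hpos1 _ (abs_lt.2 ⟨by linarith [(hmaps x hxI).1], hult x hx⟩)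
      exact ⟨huderiv x hx, Real.rpow_pos_of_pos hgx _⟩
    · -- continuity of the derivative
      intro x hx
      have hxI : x ∈ Icc 0 (pipq/2) := Ico_subset_Icc_self hx
      have h1 : ContinuousWithinAt u (Ico 0 (pipq/2)) x :=
        (hucont x hx).mono Ico_subset_Icc_self
      have h2 : ContinuousWithinAt (fun x => 1 - u x ^ q) (Ico 0 (pipq/2)) x :=
        continuousWithinAt_const.sub (h1.rpow_const (Or.inr hq0.le))
      have hgx : 0 < 1 - u x ^ q :=
        hpos1 _ (abs_lt.2 ⟨by linarith [(hmaps x hxI).1], hult x hx⟩)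
      exact h2.rpow_const (Or.inl hgx.ne')
    · -- the p-Laplacian equation
      intro x hx
      have hxIco : x ∈ Ico 0 (pipq/2) := ⟨hx.1.le, hx.2⟩
      have hxI : x ∈ Icc 0 (pipq/2) := Ico_subset_Icc_self hxIco
      have hux0 : 0 < u x := hugt x hxI hx.1
      have hux1 : u x < 1 := hult x hxIco
      have hgx : 0 < 1 - u x ^ q := hpos1 _ (abs_lt.2 ⟨by linarith, hux1⟩)
      have hmem : Icc 0 (pipq/2) ∈ 𝓝 x := Icc_mem_nhds hx.1 hx.2
      have hud : HasDerivAt u ((1 - u x ^ q) ^ (1/p)) x :=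
        (huderiv x hxIco).hasDerivAt hmem
      have h1 : HasDerivAt (fun y => u y ^ q)
          (q * u x ^ (q - 1) * ((1 - u x ^ q) ^ (1/p))) x :=
        (Real.hasDerivAt_rpow_const (Or.inl hux0.ne')).comp x hud
      have h2 : HasDerivAt (fun y => 1 - u y ^ q)
          (-(q * u x ^ (q - 1) * ((1 - u x ^ q) ^ (1/p)))) x := by
        exact ((hasDerivAt_const x (1:ℝ)).sub h1).congr_deriv (zero_sub _)
      have h3 : HasDerivAt (fun y => (1 - u y ^ q) ^ ((p-1)/p))
          (((p-1)/p) * (1 - u x ^ q) ^ ((p-1)/p - 1) *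
            (-(q * u x ^ (q - 1) * ((1 - u x ^ q) ^ (1/p))))) x :=
        by have := (Real.hasDerivAt_rpow_const (p := (p-1)/p) (Or.inl hgx.ne')).comp x h2; exact this
      have heq : (fun y => ((1 - u y ^ q) ^ (1/p)) ^ (p - 1))
          =ᶠ[𝓝 x] (fun y => (1 - u y ^ q) ^ ((p-1)/p)) := by
        filter_upwards [hmem] with y hy
        have huy := hmaps y hy
        have huyq : u y ^ q ≤ 1 := Real.rpow_le_one huy.1 huy.2 hq0.le
        have h0 : (0:ℝ) ≤ 1 - u y ^ q := by linarith
        rw [← Real.rpow_mul h0]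
        congr 1
        field_simp
      have hfinal := h3.congr_of_eventuallyEq heq
      convert hfinal using 1
      · rfl
      · rfl
      have e1 : (p-1)/p - 1 = -(1/p) := by field_simp; ring
      have e2 : (1 - u x ^ q) ^ (-(1/p)) * (1 - u x ^ q) ^ (1/p) = 1 := by
        rw [← Real.rpow_add hgx]
        norm_num
      rw [e1]
      have e3 : ((p-1)/p) * (1 - u x ^ q) ^ (-(1/p)) *
          (-(q * u x ^ (q - 1) * ((1 - u x ^ q) ^ (1/p))))
          = -((p - 1) * q / p) * u x ^ (q - 1) *
            ((1 - u x ^ q) ^ (-(1/p)) * (1 - u x ^ q) ^ (1/p)) := by ring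
      rw [e3, e2, mul_one]
  · -- degenerate case: integrand not integrable, pipq = 0, everything vacuous
    have hF1 : F 1 = 0 := by rw [hFg]; exact intervalIntegral.integral_undef hI
    have hzero : pipq = 0 := by rw [hpi, hF1]; ring
    refine ⟨hu0, hpart2, ?_, ?_, ?_⟩
    · intro x hx
      rw [hzero] at hx
      norm_num at hx
    · rw [hzero]
      norm_num
    · intro x hx
      rw [hzero] at hx
      norm_num at hx
end

section
/- Let p > 1 and p* = p/(p−1). Then 2^{2/p}·∫₀¹ (1 − t^p)^{−1/p*} dt = 2·∫₀¹ (1 − t^p)^{−1/2} dt; equivalently, 2^{2/p}·π_{p*,p} = 2·π_{2,p}, i.e. π_{2,p}/2^{2/p} = π_{p*,p}/2. -/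
/-!
Substituting `u = t ^ p` turns `∫₀¹ (1 - t ^ p) ^ (b - 1) dt` into `B(1/p, b) / p`, so both sides
are Beta values, `B(1/p, 1/p)` and `B(1/p, 1/2)`. Legendre's duplication formula
`Γ(x) Γ(x + 1/2) = 2 ^ (1 - 2x) √π Γ(2x)` is exactly `B(x, x) = 2 ^ (1 - 2x) B(x, 1/2)`.
-/

open MeasureTheory Set Real ProbabilityTheory

theorem integral_rpow_mul_one_sub_rpow_eq_beta {u v : ℝ} (hu : 0 < u) (hv : 0 < v) :
    ∫ x in (0:ℝ)..1, x ^ (u - 1) * (1 - x) ^ (v - 1) = beta u v := by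
  have hcast : Complex.betaIntegral u v =
      ((∫ x in (0:ℝ)..1, x ^ (u - 1) * (1 - x) ^ (v - 1) : ℝ) : ℂ) := by
    rw [Complex.betaIntegral, ← intervalIntegral.integral_ofReal]
    refine intervalIntegral.integral_congr fun x hx => ?_
    rw [uIcc_of_le zero_le_one] at hx
    push_cast
    rw [Complex.ofReal_cpow hx.1, Complex.ofReal_cpow (sub_nonneg.2 hx.2)]
    push_cast
    rfl
  rw [beta_eq_betaIntegralReal u v hu hv, hcast, Complex.ofReal_re]

theorem image_rpow_Ioo_zero_one {p : ℝ} (hp : 0 < p) : (· ^ p) '' Ioo (0:ℝ) 1 = Ioo 0 1 := by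
  ext u
  constructor
  · rintro ⟨t, ht, rfl⟩
    exact ⟨rpow_pos_of_pos ht.1 p, rpow_lt_one ht.1.le ht.2 hp⟩
  · intro hu
    exact ⟨u ^ p⁻¹, ⟨rpow_pos_of_pos hu.1 _, rpow_lt_one hu.1.le hu.2 (inv_pos.2 hp)⟩,
      rpow_inv_rpow hu.1.le hp.ne'⟩

theorem integral_comp_rpow_zero_one {E : Type*} [NormedAddCommGroup E] [NormedSpace ℝ E]
    (g : ℝ → E) {p : ℝ} (hp : 0 < p) :
    ∫ t in (0:ℝ)..1, g (t ^ p) = p⁻¹ • ∫ u in (0:ℝ)..1, u ^ (p⁻¹ - 1) • g u := by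
  have hp' : 0 < p⁻¹ := inv_pos.2 hp
  have key := integral_image_eq_integral_abs_deriv_smul (measurableSet_Ioo (a := 0) (b := 1))
    (fun u hu => (hasDerivAt_rpow_const (p := p⁻¹) (Or.inl (mem_Ioo.1 hu).1.ne')).hasDerivWithinAt)
    ((rpow_left_injOn hp'.ne').mono fun _ h => mem_Ici.2 h.1.le) (fun t => g (t ^ p))
  rw [image_rpow_Ioo_zero_one hp'] at key
  simp only [intervalIntegral.integral_of_le zero_le_one, integral_Ioc_eq_integral_Ioo, key,
    ← integral_smul]
  refine setIntegral_congr_fun measurableSet_Ioo fun u hu => ?_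
  rw [rpow_inv_rpow hu.1.le hp.ne', abs_of_pos (by have := hu.1; positivity), smul_smul]

theorem integral_one_sub_rpow_rpow_eq_beta {p b : ℝ} (hp : 0 < p) (hb : 0 < b) :
    ∫ t in (0:ℝ)..1, (1 - t ^ p) ^ (b - 1) = p⁻¹ * beta p⁻¹ b := by
  rw [integral_comp_rpow_zero_one (fun u => (1 - u) ^ (b - 1)) hp,
    ← integral_rpow_mul_one_sub_rpow_eq_beta (inv_pos.2 hp) hb]
  rfl

theorem beta_self_eq_two_rpow_mul_beta_one_half {x : ℝ} (hx : 0 < x) :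
    beta x x = 2 ^ (1 - 2 * x) * beta x (1 / 2) := by
  have hdup := Gamma_mul_Gamma_add_half x
  have h2x : Gamma (2 * x) ≠ 0 := (Gamma_pos_of_pos (by linarith)).ne'
  have hxh : Gamma (x + 1 / 2) ≠ 0 := (Gamma_pos_of_pos (by linarith)).ne'
  simp only [beta, Gamma_one_half_eq, mul_div_assoc', ← two_mul]
  rw [div_eq_div_iff h2x hxh]
  linear_combination Gamma x * hdup

/-- The identity π_{2,p}/2^{2/p} = π_{p*,p}/2 asserted in Lemma 1. -/
theorem pi2p_pistp_relation
    (p pst : ℝ) (hp : 1 < p) (hpst : pst = p / (p - 1)) :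
    2 ^ ((2:ℝ)/p) * ∫ t in (0:ℝ)..1, (1 - t ^ p) ^ (-(1/pst)) =
      2 * ∫ t in (0:ℝ)..1, (1 - t ^ p) ^ (-(1/2) : ℝ) := by
  have hp0 : 0 < p := zero_lt_one.trans hp
  have hexp : -(1 / pst) = p⁻¹ - 1 := by
    rw [hpst]
    field_simp
    ring
  rw [hexp, show (-(1/2) : ℝ) = 1 / 2 - 1 by norm_num,
    integral_one_sub_rpow_rpow_eq_beta hp0 (inv_pos.2 hp0),
    integral_one_sub_rpow_rpow_eq_beta hp0 one_half_pos,
    beta_self_eq_two_rpow_mul_beta_one_half (inv_pos.2 hp0)]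
  have hpow : (2:ℝ) ^ (2 / p) * 2 ^ (1 - 2 * p⁻¹) = 2 := by
    rw [← rpow_add two_pos, div_eq_mul_inv, add_sub_cancel, rpow_one]
  linear_combination p⁻¹ * beta p⁻¹ (1 / 2) * hpow
end
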